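/- arXiv:1602.04586 — 11 statements merged into one kernel-verified Lean document; each statement's English description precedes it below -/
import Mathlib

section
/- If f^k is average chain transitive for some integer k > 1, then f is average chain transitive. -/
open Filter Finset

section Defs
variable {X : Type*} [PseudoMetricSpace X]

/-- `c` is a `δ`-average-chain of `f` from `x` to `y` of length `n`. -/
def avgChain (f : X → X) (δ : ℝ) (x y : X) (n : ℕ) : Prop :=
  ∃ c : ℕ → X, c 0 = x ∧ c n = y ∧ ∃ N : ℕ, 1 ≤ N ∧ N ≤ n ∧
    ∀ m : ℕ, N ≤ m → m ≤ n →
      (∑ i ∈ Finset.range m, dist (f (c i)) (c (i + 1))) / m < δ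

def avgChainTransitive (f : X → X) : Prop :=
  ∀ δ > (0:ℝ), ∀ x y : X, ∃ n : ℕ, avgChain f δ x y n

def avgChainMixing (f : X → X) : Prop :=
  ∀ δ > (0:ℝ), ∀ x y : X, ∃ n₀ : ℕ, ∀ n ≥ n₀, avgChain f δ x y n

/-- `c` is a `δ`-chain of `f` from `x` to `y` of length `n`. -/
def isChain (f : X → X) (δ : ℝ) (x y : X) (n : ℕ) : Prop :=
  ∃ c : ℕ → X, c 0 = x ∧ c n = y ∧ ∀ i < n, dist (f (c i)) (c (i + 1)) < δ

def chainTransitive (f : X → X) : Prop :=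
  ∀ δ > (0:ℝ), ∀ x y : X, ∃ n : ℕ, 0 < n ∧ isChain f δ x y n

def chainMixing (f : X → X) : Prop :=
  ∀ δ > (0:ℝ), ∀ x y : X, ∃ N : ℕ, 0 < N ∧ ∀ n ≥ N, isChain f δ x y n

/-- Chain equivalence: δ-chains both ways, for every δ. -/
def chainEquivalent (f : X → X) (x y : X) : Prop :=
  ∀ δ > (0:ℝ), (∃ n : ℕ, 0 < n ∧ isChain f δ x y n) ∧
    (∃ n : ℕ, 0 < n ∧ isChain f δ y x n)

def chainRecurrent (f : X → X) (x : X) : Prop := chainEquivalent f x x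

/-- almost average shadowing property -/
def ALASP (f : X → X) : Prop :=
  ∀ ε > (0:ℝ), ∃ δ > (0:ℝ), ∀ x : ℕ → X,
    Filter.atTop.limsup
        (fun n : ℕ => (∑ i ∈ Finset.range n, dist (f (x i)) (x (i + 1))) / n) < δ →
    ∃ z : X, Filter.atTop.limsup
        (fun n : ℕ => (∑ i ∈ Finset.range n, dist (f^[i] z) (x i)) / n) < ε

/-- average shadowing property -/
def ASP (f : X → X) : Prop :=
  ∀ ε > (0:ℝ), ∃ δ > (0:ℝ), ∀ x : ℕ → X,
    (∃ N : ℕ, 0 < N ∧ ∀ n ≥ N, ∀ k : ℕ,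
      (∑ i ∈ Finset.range n, dist (f (x (i + k))) (x (i + k + 1))) / n < δ) →
    ∃ z : X, Filter.atTop.limsup
        (fun n : ℕ => (∑ i ∈ Finset.range n, dist (f^[i] z) (x i)) / n) < ε

def shadowingProperty (f : X → X) : Prop :=
  ∀ ε > (0:ℝ), ∃ δ > (0:ℝ), ∀ x : ℕ → X,
    (∀ i : ℕ, dist (f (x i)) (x (i + 1)) < δ) →
    ∃ z : X, ∀ i : ℕ, dist (f^[i] z) (x i) < ε

/-- upper density of a set of nonnegative integers -/
noncomputable def upperDensity (A : Set ℕ) : ℝ :=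
  Filter.atTop.limsup (fun n : ℕ => ((A ∩ Set.Iio n).ncard : ℝ) / n)

end Defs

open scoped Classical in
noncomputable def discMetric (α : Type*) : MetricSpace α where
  dist x y := if x = y then 0 else 1
  dist_self x := by simp
  dist_comm x y := by by_cases h : x = y <;> simp [h, eq_comm]
  dist_triangle x y z := by
    by_cases h1 : x = y <;> by_cases h2 : y = z <;> by_cases h3 : x = z <;> simp_all
  eq_of_dist_eq_zero := by
    intro x y h
    by_cases hxy : x = y
    · exact hxy
    · simp [hxy] at h

/-!
A `δ`-average-chain `c` of `f^[k]` becomes one of `f` by inserting the exact iterates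
`f (c i), …, f^[k-1] (c i)` after each `c i`. The new chain only errs at the ends of blocks, so
its error sum over the first `m` steps is that of `c` over the first `m / k` steps, and dividing
by `m ≥ m / k` instead of `m / k` can only decrease the average.
-/

section IterateChains
variable {X : Type*} (f : X → X) (k : ℕ) (c : ℕ → X)

def refineChain (j : ℕ) : X := f^[j % k] (c (j / k))

lemma refineChain_mul (i : ℕ) (hk : 0 < k) : refineChain f k c (i * k) = c i := by
  simp [refineChain, Nat.mul_div_cancel _ hk]

variable [PseudoMetricSpace X]

lemma dist_refineChain_succ (j : ℕ) :
    dist (f (refineChain f k c j)) (refineChain f k c (j + 1)) =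
      if k ∣ j + 1 then dist (f^[k] (c (j / k))) (c (j / k + 1)) else 0 := by
  have hj := Nat.div_add_mod j k
  have hj' := Nat.div_add_mod (j + 1) k
  unfold refineChain
  split_ifs with hd
  · have hlast : j % k + 1 = k := by
      rw [Nat.succ_div_of_dvd hd, Nat.mod_eq_zero_of_dvd hd, Nat.mul_add] at hj'
      omega
    rw [Nat.succ_div_of_dvd hd, Nat.mod_eq_zero_of_dvd hd, Function.iterate_zero_apply,
      ← Function.iterate_succ_apply' f, Nat.succ_eq_add_one, hlast]
  · have hsucc : (j + 1) % k = j % k + 1 := by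
      rw [Nat.succ_div_of_not_dvd hd] at hj'
      omega
    rw [Nat.succ_div_of_not_dvd hd, hsucc, Function.iterate_succ_apply', dist_self]

lemma sum_dist_refineChain (m : ℕ) :
    ∑ j ∈ range m, dist (f (refineChain f k c j)) (refineChain f k c (j + 1)) =
      ∑ i ∈ range (m / k), dist (f^[k] (c i)) (c (i + 1)) := by
  induction m with
  | zero => simp
  | succ m ih =>
    rw [sum_range_succ, ih, dist_refineChain_succ f k c, Nat.succ_div]
    split_ifs with hd
    · rw [sum_range_succ]
    · rw [add_zero, add_zero]

end IterateChains

lemma avgChain_of_avgChain_iterate {X : Type*} [PseudoMetricSpace X] {f : X → X} {k : ℕ}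
    (hk : 0 < k) {δ : ℝ} {x y : X} {n : ℕ} (h : avgChain (f^[k]) δ x y n) :
    avgChain f δ x y (n * k) := by
  obtain ⟨c, rfl, rfl, N, hN, hNn, havg⟩ := h
  refine ⟨refineChain f k c, by simpa using refineChain_mul f k c 0 hk,
    refineChain_mul f k c n hk, N * k, Nat.one_le_iff_ne_zero.mpr (by positivity),
    Nat.mul_le_mul_right k hNn, fun m hm hmn => ?_⟩
  have hq : N ≤ m / k := (Nat.le_div_iff_mul_le hk).mpr hm
  have hqn : m / k ≤ n := Nat.div_le_of_le_mul (by rwa [mul_comm])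
  have hq0 : (0 : ℝ) < (m / k : ℕ) := by exact_mod_cast hN.trans hq
  rw [sum_dist_refineChain f k c]
  calc (∑ i ∈ range (m / k), dist (f^[k] (c i)) (c (i + 1))) / m
      ≤ (∑ i ∈ range (m / k), dist (f^[k] (c i)) (c (i + 1))) / (m / k : ℕ) :=
        div_le_div_of_nonneg_left (sum_nonneg fun _ _ => dist_nonneg) hq0
          (by exact_mod_cast Nat.div_le_self m k)
    _ < δ := havg _ hq hqn

lemma avgChainTransitive_of_iterate {X : Type*} [PseudoMetricSpace X] {f : X → X} {k : ℕ}
    (hk : 0 < k) (h : avgChainTransitive (f^[k])) : avgChainTransitive f := fun δ hδ x y =>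
  let ⟨_, hn⟩ := h δ hδ x y
  ⟨_, avgChain_of_avgChain_iterate hk hn⟩

theorem stmt0_general {X : Type*} [MetricSpace X] (f : X → X)
    (k : ℕ) (hk : 1 < k) (h : avgChainTransitive (f^[k])) :
    avgChainTransitive f :=
  avgChainTransitive_of_iterate (by omega) h

theorem stmt0 {X : Type*} [MetricSpace X] (f : X → X) (hf : Continuous f)
    (k : ℕ) (hk : 1 < k) (h : avgChainTransitive (f^[k])) :
    avgChainTransitive f :=
  stmt0_general f k hk h
end

section
/- If f is a Lipschitz map that is average chain mixing, then f is totally average chain transitive, i.e., f^k is average chain transitive for every k ∈ ℕ. -/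
open Filter Finset

/-!
The `k`-th iterate of a `K`-Lipschitz map moves the start of a chain of length `k` to within
`K ^ k` times the total jump of the chain from its end. Cutting a `δ`-average-chain of `f` of
length `n * k` into `n` blocks of length `k` therefore yields an average-chain of `f^[k]` of
length `n` whose average jump is at most `K ^ k * k * δ`. Since the definition of an
average-chain allows `N = n`, only the average over the whole chain matters, so average chain
mixing of `f` (applied with `δ / (K ^ k * k)` and length `n₀ * k`) gives average chain
transitivity of `f^[k]`.
-/

section AverageChain

variable {X : Type*} [PseudoMetricSpace X]

theorem avgChain_iff {f : X → X} {δ : ℝ} {x y : X} {n : ℕ} :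
    avgChain f δ x y n ↔ 1 ≤ n ∧ ∃ c : ℕ → X, c 0 = x ∧ c n = y ∧
      (∑ i ∈ range n, dist (f (c i)) (c (i + 1))) / n < δ := by
  constructor
  · rintro ⟨c, hc0, hcn, N, hN1, hNn, havg⟩
    exact ⟨hN1.trans hNn, c, hc0, hcn, havg n hNn le_rfl⟩
  · rintro ⟨hn, c, hc0, hcn, havg⟩
    refine ⟨c, hc0, hcn, n, hn, le_rfl, fun m hnm hmn => ?_⟩
    rwa [le_antisymm hmn hnm]

theorem dist_iterate_le_pow_mul_sum {f : X → X} {K : NNReal} (hf : LipschitzWith K f)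
    (hK : 1 ≤ K) (c : ℕ → X) (m : ℕ) :
    dist (f^[m] (c 0)) (c m) ≤ (K : ℝ) ^ m * ∑ i ∈ range m, dist (f (c i)) (c (i + 1)) := by
  induction m with
  | zero => simp
  | succ m ih =>
    have hK1 : (1 : ℝ) ≤ K := hK
    have hKm : (1 : ℝ) ≤ (K : ℝ) ^ (m + 1) := one_le_pow₀ hK1
    have hjump := dist_nonneg (x := f (c m)) (y := c (m + 1))
    calc dist (f^[m + 1] (c 0)) (c (m + 1))
        ≤ dist (f (f^[m] (c 0))) (f (c m)) + dist (f (c m)) (c (m + 1)) := by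
          rw [Function.iterate_succ_apply']
          exact dist_triangle _ _ _
      _ ≤ K * ((K : ℝ) ^ m * ∑ i ∈ range m, dist (f (c i)) (c (i + 1)))
            + (K : ℝ) ^ (m + 1) * dist (f (c m)) (c (m + 1)) := by
          gcongr
          · exact (hf.dist_le_mul _ _).trans (by gcongr)
          · exact le_mul_of_one_le_left hjump hKm
      _ = (K : ℝ) ^ (m + 1) * ∑ i ∈ range (m + 1), dist (f (c i)) (c (i + 1)) := by
          rw [sum_range_succ]
          ring

theorem sum_range_mul_eq_sum_sum (g : ℕ → ℝ) (n k : ℕ) :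
    ∑ i ∈ range (n * k), g i = ∑ j ∈ range n, ∑ i ∈ range k, g (j * k + i) := by
  induction n with
  | zero => simp
  | succ n ih => rw [sum_range_succ, ← ih, Nat.succ_mul, sum_range_add]

theorem avgChain.iterate {f : X → X} {K : NNReal} (hf : LipschitzWith K f) (hK : 1 ≤ K)
    {δ : ℝ} {x y : X} {n k : ℕ} (h : avgChain f δ x y (n * k)) :
    avgChain f^[k] ((K : ℝ) ^ k * k * δ) x y n := by
  obtain ⟨hnk, c, hc0, hcn, havg⟩ := avgChain_iff.mp h
  have hn : 0 < n := Nat.pos_of_mul_pos_right hnk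
  have hk : 0 < k := Nat.pos_of_mul_pos_left hnk
  refine avgChain_iff.mpr ⟨hn, fun j => c (j * k), by simpa using hc0, hcn, ?_⟩
  have hblock : ∀ j, dist (f^[k] (c (j * k))) (c ((j + 1) * k)) ≤
      (K : ℝ) ^ k * ∑ i ∈ range k, dist (f (c (j * k + i))) (c (j * k + i + 1)) := fun j => by
    simpa [add_mul, add_assoc] using dist_iterate_le_pow_mul_sum hf hK (fun i => c (j * k + i)) k
  have htotal : ∑ i ∈ range (n * k), dist (f (c i)) (c (i + 1)) < δ * (n * k) := by
    rwa [div_lt_iff₀ (by positivity), Nat.cast_mul] at havg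
  rw [div_lt_iff₀ (by positivity)]
  calc ∑ j ∈ range n, dist (f^[k] (c (j * k))) (c ((j + 1) * k))
      ≤ ∑ j ∈ range n, (K : ℝ) ^ k *
          ∑ i ∈ range k, dist (f (c (j * k + i))) (c (j * k + i + 1)) :=
        sum_le_sum fun j _ => hblock j
    _ = (K : ℝ) ^ k * ∑ i ∈ range (n * k), dist (f (c i)) (c (i + 1)) := by
        rw [← mul_sum, sum_range_mul_eq_sum_sum]
    _ < (K : ℝ) ^ k * (δ * (n * k)) := by gcongr
    _ = (K : ℝ) ^ k * k * δ * n := by ring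

end AverageChain

theorem stmt1 {X : Type*} [MetricSpace X] (f : X → X) (L : NNReal)
    (hf : LipschitzWith L f) (h : avgChainMixing f) :
    ∀ k : ℕ, 1 ≤ k → avgChainTransitive (f^[k]) := by
  intro k hk δ hδ x y
  set K : NNReal := max L 1
  have hC : (0 : ℝ) < (K : ℝ) ^ k * k := by positivity
  obtain ⟨n₀, hn₀⟩ := h (δ / ((K : ℝ) ^ k * k)) (div_pos hδ hC) x y
  refine ⟨n₀, ?_⟩
  have hchain := (hn₀ (n₀ * k) (Nat.le_mul_of_pos_right n₀ hk)).iterate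
    (hf.weaken (le_max_left L 1)) (le_max_right L 1)
  rwa [mul_div_cancel₀ δ hC.ne'] at hchain
end

section
/- If f is average chain mixing, then f × f is average chain transitive, where X × X carries the sup metric d*((x₁,y₁),(x₂,y₂)) = max{d(x₁,x₂), d(y₁,y₂)}. -/
open Filter Finset

section ProdMap
variable {X Y : Type*} [PseudoMetricSpace X] [PseudoMetricSpace Y]

theorem avgChain.prodMap {f : X → X} {g : Y → Y} {δ₁ δ₂ : ℝ} {x y : X} {x' y' : Y}
    {n : ℕ} (h₁ : avgChain f δ₁ x y n) (h₂ : avgChain g δ₂ x' y' n) :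
    avgChain (Prod.map f g) (δ₁ + δ₂) (x, x') (y, y') n := by
  obtain ⟨c, hc0, hcn, N, hN1, hNn, hc⟩ := h₁
  obtain ⟨c', hc'0, hc'n, N', -, hN'n, hc'⟩ := h₂
  refine ⟨fun i => (c i, c' i), by simp [hc0, hc'0], by simp [hcn, hc'n], max N N',
    hN1.trans (le_max_left _ _), max_le hNn hN'n, fun m hm hmn => ?_⟩
  have hsum : ∑ i ∈ range m, dist (Prod.map f g (c i, c' i)) (c (i + 1), c' (i + 1)) ≤
      ∑ i ∈ range m, dist (f (c i)) (c (i + 1)) +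
        ∑ i ∈ range m, dist (g (c' i)) (c' (i + 1)) := by
    rw [← sum_add_distrib]
    exact sum_le_sum fun i _ => max_le_add_of_nonneg dist_nonneg dist_nonneg
  calc (∑ i ∈ range m, dist (Prod.map f g (c i, c' i)) (c (i + 1), c' (i + 1))) / m
      ≤ (∑ i ∈ range m, dist (f (c i)) (c (i + 1))) / m +
          (∑ i ∈ range m, dist (g (c' i)) (c' (i + 1))) / m := by
        rw [← add_div]
        exact div_le_div_of_nonneg_right hsum m.cast_nonneg
    _ < δ₁ + δ₂ :=
        add_lt_add (hc m (le_of_max_le_left hm) hmn) (hc' m (le_of_max_le_right hm) hmn)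

end ProdMap

theorem stmt2_general {X : Type*} [MetricSpace X] (f : X → X)
    (h : avgChainMixing f) :
    avgChainTransitive (Prod.map f f : X × X → X × X) := by
  intro δ hδ p q
  obtain ⟨n₁, h₁⟩ := h (δ / 2) (half_pos hδ) p.1 q.1
  obtain ⟨n₂, h₂⟩ := h (δ / 2) (half_pos hδ) p.2 q.2
  -- mixing (not mere transitivity) lets both coordinates use the same length
  refine ⟨max n₁ n₂, ?_⟩
  simpa only [add_halves] using (h₁ _ (le_max_left _ _)).prodMap (h₂ _ (le_max_right _ _))

theorem stmt2 {X : Type*} [MetricSpace X] (f : X → X) (hf : Continuous f)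
    (h : avgChainMixing f) :
    avgChainTransitive (Prod.map f f : X × X → X × X) :=
  stmt2_general f h
end

section
/- If f is totally average chain transitive, then f × f is average chain transitive with respect to the sup metric on X × X. -/
open Filter Finset

/-!
With `N = n` allowed, a `δ`-average-chain is just a chain whose mean jump over the whole length
is `< δ`. An `f^[r]`-chain unfolds into an `f`-chain `r` times as long with the same total jump,
so total average chain transitivity gives, for `f`, mean-`δ` chains `x₁ ⇝ x₂` and `y₁ ⇝ y₂` and loops
at `x₂` of length `r` and at `y₂` of length a multiple of `r`, all lengths being multiples of `r`.
Appending loops makes the two chains equally long, and pairing them gives a chain of `f × f`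
whose jumps are bounded by the sums of the coordinate jumps.
-/

section MeanChain
variable {X Y : Type*} [PseudoMetricSpace X] [PseudoMetricSpace Y]

def meanChain (f : X → X) (δ : ℝ) (x y : X) (n : ℕ) : Prop :=
  ∃ c : ℕ → X, c 0 = x ∧ c n = y ∧
    ∑ i ∈ range n, dist (f (c i)) (c (i + 1)) < δ * n

namespace meanChain

variable {f : X → X} {δ : ℝ} {x y z : X} {n : ℕ}

theorem pos (h : meanChain f δ x y n) : 0 < n := by
  obtain ⟨c, -, -, hc⟩ := h
  refine Nat.pos_of_ne_zero fun hn => ?_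
  simp [hn] at hc

theorem of_iterate {k m : ℕ} (hk : 0 < k) (h : meanChain (f^[k]) δ x y m) :
    meanChain f δ x y (k * m) := by
  have hm := h.pos
  obtain ⟨c, rfl, rfl, hc⟩ := h
  -- Between `c q` and `c (q + 1)` insert the orbit segment `f (c q), …, f^[k-1] (c q)`.
  set c' : ℕ → X := fun j => f^[j % k] (c (j / k)) with hc'
  have c'_mul_add (q : ℕ) {i : ℕ} (hi : i < k) : c' (k * q + i) = f^[i] (c q) := by
    simp only [hc', Nat.mul_add_mod, Nat.mod_eq_of_lt hi, Nat.mul_add_div hk,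
      Nat.div_eq_of_lt hi, add_zero]
  have c'_mul (q : ℕ) : c' (k * q) = c q := by simpa using c'_mul_add q hk
  have block (q : ℕ) : ∑ i ∈ range k, dist (f (c' (k * q + i))) (c' (k * q + i + 1)) =
      dist (f^[k] (c q)) (c (q + 1)) := by
    obtain ⟨k, rfl⟩ : ∃ k', k = k' + 1 := ⟨k - 1, by omega⟩
    rw [sum_range_succ, sum_eq_zero, zero_add]
    · rw [c'_mul_add q (Nat.lt_succ_self k), show (k + 1) * q + k + 1 = (k + 1) * (q + 1) by ring,
        c'_mul, ← Function.iterate_succ_apply' f k]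
    · intro i hi
      have hi : i + 1 < k + 1 := by simpa using hi
      rw [c'_mul_add q (by omega), add_assoc, c'_mul_add q hi, Function.iterate_succ_apply',
        dist_self]
  have total (M : ℕ) : ∑ j ∈ range (k * M), dist (f (c' j)) (c' (j + 1)) =
      ∑ q ∈ range M, dist (f^[k] (c q)) (c (q + 1)) := by
    induction M with
    | zero => simp
    | succ M ih => rw [Nat.mul_succ, sum_range_add, ih, block, sum_range_succ]
  refine ⟨c', by simpa using c'_mul 0, c'_mul m, ?_⟩
  have hδm : 0 < δ * m := (sum_nonneg fun _ _ => dist_nonneg).trans_lt hc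
  have hk' : (1 : ℝ) ≤ k := by exact_mod_cast hk
  rw [total]
  calc _ < δ * m := hc
    _ ≤ δ * ↑(k * m) := by push_cast; nlinarith

theorem trans {n₁ n₂ : ℕ} (h₁ : meanChain f δ x y n₁) (h₂ : meanChain f δ y z n₂) :
    meanChain f δ x z (n₁ + n₂) := by
  have hn₁ := h₁.pos
  obtain ⟨c, rfl, rfl, hc⟩ := h₁
  obtain ⟨d, hd0, rfl, hd⟩ := h₂
  set e : ℕ → X := fun j => if j < n₁ then c j else d (j - n₁) with he
  have e_left {i : ℕ} (hi : i ≤ n₁) : e i = c i := by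
    rcases hi.lt_or_eq with hi | rfl
    · simp [he, hi]
    · simp [he, hd0]
  have e_right (i : ℕ) : e (n₁ + i) = d i := by simp [he]
  refine ⟨e, e_left hn₁.le, e_right n₂, ?_⟩
  rw [sum_range_add]
  have hleft : ∑ i ∈ range n₁, dist (f (e i)) (e (i + 1)) =
      ∑ i ∈ range n₁, dist (f (c i)) (c (i + 1)) := by
    refine sum_congr rfl fun i hi => ?_
    have hi := mem_range.1 hi
    rw [e_left hi.le, e_left hi]
  simp only [hleft, add_assoc, e_right]
  push_cast
  linarith

theorem append_loops {p : ℕ} (h : meanChain f δ x y n) (hloop : meanChain f δ y y p) (i : ℕ) :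
    meanChain f δ x y (n + i * p) := by
  induction i with
  | zero => simpa using h
  | succ i ih => simpa [add_mul, add_assoc] using ih.trans hloop

theorem prodMap {g : Y → Y} {δ' : ℝ} {x' y' : Y} (h : meanChain f δ x y n)
    (h' : meanChain g δ' x' y' n) : meanChain (Prod.map f g) (δ + δ') (x, x') (y, y') n := by
  obtain ⟨c, rfl, rfl, hc⟩ := h
  obtain ⟨c', rfl, rfl, hc'⟩ := h'
  refine ⟨fun j => (c j, c' j), rfl, rfl, ?_⟩
  calc ∑ i ∈ range n, dist (Prod.map f g (c i, c' i)) (c (i + 1), c' (i + 1))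
      ≤ ∑ i ∈ range n, (dist (f (c i)) (c (i + 1)) + dist (g (c' i)) (c' (i + 1))) :=
        sum_le_sum fun i _ => max_le_add_of_nonneg dist_nonneg dist_nonneg
    _ < (δ + δ') * n := by rw [sum_add_distrib, add_mul]; exact add_lt_add hc hc'

end meanChain

theorem avgChain_iff_meanChain {f : X → X} {δ : ℝ} {x y : X} {n : ℕ} :
    avgChain f δ x y n ↔ meanChain f δ x y n := by
  constructor
  · rintro ⟨c, hc0, hcn, N, hN, hNn, hm⟩
    have hn : (0 : ℝ) < n := by exact_mod_cast hN.trans hNn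
    exact ⟨c, hc0, hcn, (div_lt_iff₀ hn).1 (hm n hNn le_rfl)⟩
  · intro h
    have hn := h.pos
    obtain ⟨c, hc0, hcn, hc⟩ := h
    refine ⟨c, hc0, hcn, n, hn, le_rfl, fun m hm hm' => ?_⟩
    rw [le_antisymm hm' hm, div_lt_iff₀ (by exact_mod_cast hn)]
    exact hc

end MeanChain

theorem stmt3_general {X : Type*} [MetricSpace X] (f : X → X)
    (h : ∀ k : ℕ, 1 ≤ k → avgChainTransitive (f^[k])) :
    avgChainTransitive (Prod.map f f : X × X → X × X) := by
  rintro δ hδ ⟨x₁, y₁⟩ ⟨x₂, y₂⟩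
  have chain (k : ℕ) (hk : 0 < k) (x y : X) : ∃ n, 0 < n ∧ meanChain f (δ / 2) x y (k * n) := by
    obtain ⟨n, hn⟩ := h k hk (δ / 2) (half_pos hδ) x y
    rw [avgChain_iff_meanChain] at hn
    exact ⟨n, hn.pos, hn.of_iterate hk⟩
  obtain ⟨r, hr, hloop_x⟩ := chain 1 one_pos x₂ x₂
  obtain ⟨α, -, hx⟩ := chain r hr x₁ x₂
  obtain ⟨β, -, hy⟩ := chain r hr y₁ y₂
  obtain ⟨w, hw, hloop_y⟩ := chain r hr y₂ y₂
  obtain ⟨w, rfl⟩ : ∃ w', w = w' + 1 := ⟨w - 1, by omega⟩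
  have hx_len : r * α + (β + α * w) * (1 * r) = r * (α + β + α * w) := by ring
  have hy_len : r * β + α * (r * (w + 1)) = r * (α + β + α * w) := by ring
  have hx' := hx_len ▸ hx.append_loops hloop_x (β + α * w)
  have hy' := hy_len ▸ hy.append_loops hloop_y α
  refine ⟨r * (α + β + α * w), ?_⟩
  rw [avgChain_iff_meanChain, ← add_halves δ]
  exact hx'.prodMap hy'

theorem stmt3 {X : Type*} [MetricSpace X] (f : X → X) (hf : Continuous f)
    (h : ∀ k : ℕ, 1 ≤ k → avgChainTransitive (f^[k])) :
    avgChainTransitive (Prod.map f f : X × X → X × X) :=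
  stmt3_general f h
end

section
/- The constant map f(x) = a on a metric space X (with at least two points) is average chain mixing, but it is not chain transitive if X contains a point y ≠ a. -/
open Filter Finset

/-! The constant map `x ↦ a` sends every point to `a`, so the chain `x, a, …, a, y` of length `n`
pays nothing except `dist a y` at its last step. Averaged over the whole chain this single jump
is `dist a y / n`, as small as we like; but an ordinary `δ`-chain has to make the jump to `y` in
one step, so it cannot reach `y ≠ a` once `δ ≤ dist a y`. -/

section ConstantMap

variable {X : Type*}

theorem avgChain_of_sum_lt [PseudoMetricSpace X] {f : X → X} {δ : ℝ} {x y : X} {n : ℕ}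
    (c : ℕ → X) (hc0 : c 0 = x) (hcn : c n = y) (hn : 1 ≤ n)
    (hsum : ∑ i ∈ range n, dist (f (c i)) (c (i + 1)) < n * δ) :
    avgChain f δ x y n := by
  refine ⟨c, hc0, hcn, n, hn, le_rfl, fun m hnm hmn => ?_⟩
  obtain rfl : m = n := le_antisymm hmn hnm
  rwa [div_lt_iff₀ (by exact_mod_cast hn), mul_comm]

def constChain (a x y : X) (n : ℕ) : ℕ → X :=
  fun i => if i = 0 then x else if i = n then y else a

theorem sum_range_dist_constChain [PseudoMetricSpace X] (a x y : X) {n : ℕ} (hn : 1 ≤ n) :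
    ∑ i ∈ range n, dist a (constChain a x y n (i + 1)) = dist a y := by
  obtain ⟨k, rfl⟩ := Nat.exists_eq_add_of_le' hn
  rw [sum_range_succ, sum_eq_zero fun i hi => ?_]
  · simp [constChain]
  · simp [constChain, (mem_range.mp hi).ne]

theorem avgChainMixing_const [PseudoMetricSpace X] (a : X) :
    avgChainMixing (fun _ : X => a) := by
  intro δ hδ x y
  obtain ⟨n₀, hn₀⟩ := exists_nat_gt (dist a y / δ)
  refine ⟨n₀, fun n hn => ?_⟩
  have hn₀δ : dist a y < n₀ * δ := (div_lt_iff₀ hδ).mp hn₀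
  have hn1 : 1 ≤ n := by
    have : 0 < n₀ := by exact_mod_cast (div_nonneg dist_nonneg hδ.le).trans_lt hn₀
    omega
  refine avgChain_of_sum_lt (constChain a x y n) (by simp [constChain])
    (by simp [constChain, Nat.one_le_iff_ne_zero.mp hn1]) hn1 ?_
  calc ∑ i ∈ range n, dist a (constChain a x y n (i + 1)) = dist a y :=
        sum_range_dist_constChain a x y hn1
    _ < n₀ * δ := hn₀δ
    _ ≤ n * δ := by gcongr

theorem dist_lt_of_isChain_const [PseudoMetricSpace X] {a x y : X} {δ : ℝ} {n : ℕ}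
    (hn : 0 < n) (h : isChain (fun _ : X => a) δ x y n) : dist a y < δ := by
  obtain ⟨c, -, hcn, hc⟩ := h
  obtain ⟨k, rfl⟩ := Nat.exists_eq_succ_of_ne_zero hn.ne'
  simpa [hcn] using hc k k.lt_add_one

theorem not_chainTransitive_const [MetricSpace X] {a y : X} (hy : y ≠ a) :
    ¬ chainTransitive (fun _ : X => a) := fun h => by
  obtain ⟨n, hn, hchain⟩ := h (dist a y) (dist_pos.mpr hy.symm) a y
  exact lt_irrefl _ (dist_lt_of_isChain_const hn hchain)

end ConstantMap

theorem stmt6 {X : Type*} [MetricSpace X] (a y : X) (hy : y ≠ a) :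
    avgChainMixing (fun _ : X => a) ∧ ¬ chainTransitive (fun _ : X => a) :=
  ⟨avgChainMixing_const a, not_chainTransitive_const hy⟩
end

section
/- Let X = {1, 2, ..., 2k} with the discrete metric and f(i) = (i+2) mod 2k (interpreted as a map of X to itself). Then f is average chain mixing but not chain transitive. -/
open Filter Finset

/-! An average chain may follow the orbit of `x` exactly and jump to `y` only at the last step;
its single error is then diluted by the length of the chain. Chains with errors below the
minimal distance of a discrete space, on the other hand, are genuine orbits, and the orbit of
`0` under `i ↦ i + 2` in `ZMod (2 * k)` stays among the even residues, so it never reaches `1`. -/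

section Chains

variable {X : Type*} [PseudoMetricSpace X]

def orbitThenJump (f : X → X) (x y : X) (n i : ℕ) : X :=
  if i = n then y else f^[i] x

lemma sum_dist_orbitThenJump (f : X → X) (x y : X) (n : ℕ) :
    ∑ i ∈ range (n + 1), dist (f (orbitThenJump f x y (n + 1) i))
      (orbitThenJump f x y (n + 1) (i + 1)) = dist (f^[n + 1] x) y := by
  rw [sum_range_succ, sum_eq_zero, zero_add]
  · simp [orbitThenJump, Function.iterate_succ_apply']
  · intro i hi
    have hi : i < n := mem_range.mp hi
    simp [orbitThenJump, show i ≠ n + 1 by omega, show i ≠ n by omega,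
      Function.iterate_succ_apply']

lemma avgChain_of_dist_iterate_div_lt {f : X → X} {δ : ℝ} {x y : X} {n : ℕ} (hn : 0 < n)
    (h : dist (f^[n] x) y / n < δ) : avgChain f δ x y n := by
  obtain ⟨n, rfl⟩ := Nat.exists_eq_add_of_lt hn
  rw [zero_add] at h ⊢
  refine ⟨orbitThenJump f x y (n + 1), by simp [orbitThenJump], by simp [orbitThenJump],
    n + 1, le_add_self, le_rfl, fun m hm hm' => ?_⟩
  rwa [le_antisymm hm' hm, sum_dist_orbitThenJump]

theorem avgChainMixing_of_dist_le {D : ℝ} (hD : ∀ a b : X, dist a b ≤ D) (f : X → X) :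
    avgChainMixing f := by
  intro δ hδ x y
  obtain ⟨n₀, hn₀⟩ := exists_nat_gt (D / δ)
  refine ⟨n₀ + 1, fun n hn => avgChain_of_dist_iterate_div_lt (by omega) ?_⟩
  have hn : D / δ < n := hn₀.trans (by exact_mod_cast Nat.lt_of_succ_le hn)
  have hn_pos : (0 : ℝ) < n := (div_nonneg (dist_nonneg.trans (hD x x)) hδ.le).trans_lt hn
  rw [div_lt_iff₀ hn_pos]
  rw [div_lt_iff₀ hδ] at hn
  linarith [hD (f^[n] x) y]

lemma iterate_eq_of_isChain {f : X → X} {δ : ℝ} (hδ : ∀ a b : X, dist a b < δ → a = b)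
    {x y : X} {n : ℕ} (hc : isChain f δ x y n) : f^[n] x = y := by
  obtain ⟨c, rfl, rfl, hc⟩ := hc
  have : ∀ i ≤ n, f^[i] (c 0) = c i := by
    intro i
    induction i with
    | zero => simp
    | succ i ih =>
      intro hi
      rw [Function.iterate_succ_apply', ih (by omega)]
      exact hδ _ _ (hc i (by omega))
  exact this n le_rfl

theorem exists_iterate_eq_of_chainTransitive {f : X → X} {δ : ℝ} (hδ₀ : 0 < δ)
    (hδ : ∀ a b : X, dist a b < δ → a = b) (hf : chainTransitive f) (x y : X) :
    ∃ n, 0 < n ∧ f^[n] x = y :=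
  let ⟨n, hn, hc⟩ := hf δ hδ₀ x y
  ⟨n, hn, iterate_eq_of_isChain hδ hc⟩

end Chains

section DiscMetric

variable {α : Type*}

open scoped Classical in
lemma discMetric_dist (a b : α) :
    @dist α (discMetric α).toDist a b = if a = b then 0 else 1 := rfl

lemma discMetric_dist_le_one (a b : α) : @dist α (discMetric α).toDist a b ≤ 1 := by
  classical
  rw [discMetric_dist]
  split_ifs <;> norm_num

lemma eq_of_discMetric_dist_lt_one {a b : α} (h : @dist α (discMetric α).toDist a b < 1) :
    a = b := by
  classical
  rw [discMetric_dist] at h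
  split_ifs at h with hab
  · exact hab
  · exact absurd h (lt_irrefl 1)

end DiscMetric

lemma ZMod.nsmul_two_ne_one (k n : ℕ) : n • (2 : ZMod (2 * k)) ≠ 1 := by
  intro h
  have h2 := congrArg (ZMod.castHom (dvd_mul_right 2 k) (ZMod 2)) h
  rw [map_nsmul, map_ofNat, map_one, show (2 : ZMod 2) = 0 from rfl, smul_zero] at h2
  exact zero_ne_one h2

theorem stmt7_general (k : ℕ) :
    @avgChainMixing (ZMod (2 * k)) (discMetric (ZMod (2 * k))).toPseudoMetricSpace
        (fun i : ZMod (2 * k) => i + 2) ∧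
    ¬ @chainTransitive (ZMod (2 * k)) (discMetric (ZMod (2 * k))).toPseudoMetricSpace
        (fun i : ZMod (2 * k) => i + 2) := by
  let _ := (discMetric (ZMod (2 * k))).toPseudoMetricSpace
  refine ⟨avgChainMixing_of_dist_le discMetric_dist_le_one _, fun hf => ?_⟩
  obtain ⟨n, -, hn⟩ := exists_iterate_eq_of_chainTransitive one_pos
    (fun _ _ => eq_of_discMetric_dist_lt_one) hf 0 1
  rw [add_right_iterate_apply_zero] at hn
  exact ZMod.nsmul_two_ne_one k n hn

theorem stmt7 (k : ℕ) (hk : 1 ≤ k) :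
    @avgChainMixing (ZMod (2 * k)) (discMetric (ZMod (2 * k))).toPseudoMetricSpace
        (fun i : ZMod (2 * k) => i + 2) ∧
    ¬ @chainTransitive (ZMod (2 * k)) (discMetric (ZMod (2 * k))).toPseudoMetricSpace
        (fun i : ZMod (2 * k) => i + 2) :=
  stmt7_general k
end

section
/- If f has the almost average shadowing property, then f^k has the almost average shadowing property for every integer k > 1. -/
open Filter Finset

/-!
Interleaving an almost average pseudo-orbit `(x_i)` of `f^[k]` with orbit segments,
`y (k * i + s) = f^[s] (x i)`, gives an almost average pseudo-orbit of `f` with no larger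
Cesàro means of the one-step errors; the shadowing errors of `x` under `f^[k]` are every `k`-th
shadowing error of `y` under `f`, so their means are at most `k` times larger.

Lean's `limsup` of a real sequence that is unbounded above is `0`, so unbounded Cesàro means
need separate care. A point with unbounded `f^[k]`-shadowing means shadows `x` outright.
Otherwise all of these means are bounded, hence so are those of `d(x_i, x_{i+1})`. If some
displacement `d(x_i, f^[r] (x i))` with `r < k` has unbounded means, take `r` minimal and insert
only `r` orbit steps per block: the block-end errors `d(f^[r] (x i), x (i + 1))` then have
unbounded means, so the padded sequence qualifies as a pseudo-orbit, while minimality of `r`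
keeps the means of every shadowing error bounded.
-/

noncomputable def cesaroMean (a : ℕ → ℝ) (n : ℕ) : ℝ := (∑ i ∈ range n, a i) / n

def CesaroBounded (a : ℕ → ℝ) : Prop := ∃ C : ℝ, ∀ᶠ n in atTop, ∑ i ∈ range n, a i ≤ C * n

section Cesaro

variable {a b : ℕ → ℝ} {k : ℕ}

lemma cesaroMean_nonneg (ha : 0 ≤ a) (n : ℕ) : 0 ≤ cesaroMean a n :=
  div_nonneg (sum_nonneg fun i _ => ha i) n.cast_nonneg

lemma cesaroMean_le_iff {n : ℕ} (hn : 0 < n) {C : ℝ} :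
    cesaroMean a n ≤ C ↔ ∑ i ∈ range n, a i ≤ C * n :=
  div_le_iff₀ (by exact_mod_cast hn)

lemma isBoundedUnder_cesaroMean_iff :
    IsBoundedUnder (· ≤ ·) atTop (cesaroMean a) ↔ CesaroBounded a := by
  refine exists_congr fun C => ?_
  rw [eventually_map]
  constructor <;> intro h <;> filter_upwards [h, eventually_gt_atTop 0] with n hn hn0
  · exact (cesaroMean_le_iff hn0).1 hn
  · exact (cesaroMean_le_iff hn0).2 hn

lemma limsup_cesaroMean_of_not_cesaroBounded (h : ¬ CesaroBounded a) :
    limsup (cesaroMean a) atTop = 0 := by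
  rw [← isBoundedUnder_cesaroMean_iff] at h
  have hempty : {C : ℝ | ∀ᶠ n in atTop, cesaroMean a n ≤ C} = ∅ :=
    Set.eq_empty_of_forall_notMem fun C hC => h ⟨C, hC⟩
  rw [limsup_eq, hempty, Real.sInf_empty]

lemma CesaroBounded.eventually_sum_le (h : CesaroBounded a) {α : ℝ}
    (hα : limsup (cesaroMean a) atTop < α) : ∀ᶠ n in atTop, ∑ i ∈ range n, a i ≤ α * n := by
  filter_upwards [eventually_lt_of_limsup_lt hα (isBoundedUnder_cesaroMean_iff.2 h),
    eventually_gt_atTop 0] with n hn hn0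
  exact (cesaroMean_le_iff hn0).1 hn.le

lemma limsup_cesaroMean_le (ha : 0 ≤ a) {α : ℝ}
    (h : ∀ᶠ n in atTop, ∑ i ∈ range n, a i ≤ α * n) : limsup (cesaroMean a) atTop ≤ α := by
  refine limsup_le_of_le (isCoboundedUnder_le_of_le atTop (cesaroMean_nonneg ha)) ?_
  filter_upwards [h, eventually_gt_atTop 0] with n hn hn0
  exact (cesaroMean_le_iff hn0).2 hn

lemma cesaroBounded_zero : CesaroBounded 0 := ⟨0, by simp⟩

lemma CesaroBounded.add (ha : CesaroBounded a) (hb : CesaroBounded b) :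
    CesaroBounded (a + b) := by
  obtain ⟨Ca, hCa⟩ := ha
  obtain ⟨Cb, hCb⟩ := hb
  refine ⟨Ca + Cb, ?_⟩
  filter_upwards [hCa, hCb] with n hna hnb
  simp only [Pi.add_apply, sum_add_distrib]
  linarith

lemma CesaroBounded.mono (hb : CesaroBounded b) (hab : ∀ i, a i ≤ b i) : CesaroBounded a := by
  obtain ⟨C, hC⟩ := hb
  exact ⟨C, hC.mono fun n hn => (sum_le_sum fun i _ => hab i).trans hn⟩

lemma cesaroBounded_sum {ι : Type*} (s : Finset ι) {a : ι → ℕ → ℝ}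
    (h : ∀ t ∈ s, CesaroBounded (a t)) : CesaroBounded fun i => ∑ t ∈ s, a t i := by
  rw [← sum_fn]
  exact sum_induction _ CesaroBounded (fun _ _ => .add) cesaroBounded_zero h

lemma CesaroBounded.comp_succ (ha : 0 ≤ a) (h : CesaroBounded a) :
    CesaroBounded fun i => a (i + 1) := by
  obtain ⟨C, hC⟩ := h
  refine ⟨2 * |C|, ?_⟩
  filter_upwards [(tendsto_add_atTop_nat 1).eventually hC, eventually_ge_atTop 1] with n hn hn1
  have hn1' : (1 : ℝ) ≤ n := by exact_mod_cast hn1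
  rw [sum_range_succ'] at hn
  push_cast at hn
  have hC1 : C * (n + 1) ≤ |C| * (n + 1) := by gcongr; exact le_abs_self C
  have hC2 : |C| * 1 ≤ |C| * n := by gcongr
  linarith [show 0 ≤ a 0 from ha 0]

lemma tendsto_const_mul_atTop_nat (hk : 0 < k) : Tendsto (fun n : ℕ => k * n) atTop atTop :=
  tendsto_id.const_mul_atTop' hk

lemma sum_range_mul_eq_sum_blocks (a : ℕ → ℝ) (k n : ℕ) :
    ∑ j ∈ range (k * n), a j = ∑ i ∈ range n, ∑ s ∈ range k, a (k * i + s) := by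
  induction n with
  | zero => simp
  | succ n ih => rw [Nat.mul_succ, sum_range_add, ih, sum_range_succ]

lemma sum_range_le_sum_blocks (ha : 0 ≤ a) (hk : 0 < k) (n : ℕ) :
    ∑ j ∈ range n, a j ≤ ∑ i ∈ range n, ∑ s ∈ range k, a (k * i + s) := by
  rw [← sum_range_mul_eq_sum_blocks]
  exact sum_le_sum_of_subset_of_nonneg (range_subset_range.2 (Nat.le_mul_of_pos_left n hk))
    fun j _ _ => ha j

lemma sum_comp_mul_add_le (ha : 0 ≤ a) {s : ℕ} (hs : s < k) (n : ℕ) :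
    ∑ i ∈ range n, a (k * i + s) ≤ ∑ j ∈ range (k * n), a j := by
  rw [sum_range_mul_eq_sum_blocks]
  exact sum_le_sum fun i _ => single_le_sum (fun t _ => ha (k * i + t)) (mem_range.2 hs)

lemma CesaroBounded.of_sum_le (h : CesaroBounded a) (hk : 0 < k)
    (hba : ∀ n, ∑ i ∈ range n, b i ≤ ∑ j ∈ range (k * n), a j) : CesaroBounded b := by
  obtain ⟨C, hC⟩ := h
  refine ⟨C * k, ?_⟩
  filter_upwards [(tendsto_const_mul_atTop_nat hk).eventually hC] with n hn
  push_cast at hn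
  linarith [hba n]

lemma limsup_cesaroMean_lt_mul (hb : 0 ≤ b) (h : CesaroBounded a) (hk : 0 < k)
    (hba : ∀ n, ∑ i ∈ range n, b i ≤ ∑ j ∈ range (k * n), a j) {ε : ℝ}
    (hε : limsup (cesaroMean a) atTop < ε) : limsup (cesaroMean b) atTop < k * ε := by
  obtain ⟨α, hα, hαε⟩ := _root_.exists_between hε
  have hb' : ∀ᶠ n in atTop, ∑ i ∈ range n, b i ≤ (k * α) * n := by
    filter_upwards [(tendsto_const_mul_atTop_nat hk).eventually (h.eventually_sum_le hα)]
      with n hn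
    push_cast at hn
    linarith [hba n]
  exact (limsup_cesaroMean_le hb hb').trans_lt (by gcongr)

lemma CesaroBounded.comp_mul_add (ha : 0 ≤ a) (h : CesaroBounded a) {s : ℕ} (hs : s < k) :
    CesaroBounded fun i => a (k * i + s) :=
  h.of_sum_le (by omega) (sum_comp_mul_add_le ha hs)

lemma cesaroBounded_of_forall_residue (ha : 0 ≤ a) (hk : 0 < k)
    (h : ∀ s < k, CesaroBounded fun i => a (k * i + s)) : CesaroBounded a :=
  (cesaroBounded_sum (range k) fun s hs => h s (mem_range.1 hs)).of_sum_le one_pos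
    fun n => by simpa using sum_range_le_sum_blocks ha hk n

end Cesaro

section Interpolation

variable {X : Type*} (f : X → X) (x : ℕ → X) {k r : ℕ}

/-- The block `k * i, …, k * i + k - 1` reads `x i, …, x i, f (x i), …, f^[r - 1] (x i)`:
the exponent `j % k + r - k` is truncated at `0`. -/
def interpolate (k r : ℕ) (j : ℕ) : X := f^[j % k + r - k] (x (j / k))

lemma interpolate_mul_add {s : ℕ} (hs : s < k) (i : ℕ) :
    interpolate f x k r (k * i + s) = f^[s + r - k] (x i) := by
  simp [interpolate, Nat.mul_add_div (by omega : 0 < k), Nat.mod_eq_of_lt hs,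
    Nat.div_eq_of_lt hs]

lemma interpolate_mul (hk : 0 < k) (hrk : r ≤ k) (i : ℕ) :
    interpolate f x k r (k * i) = x i := by
  simpa [show r - k = 0 by omega] using interpolate_mul_add f x (r := r) hk i

variable [PseudoMetricSpace X]

def stepError (y : ℕ → X) (i : ℕ) : ℝ := dist (f (y i)) (y (i + 1))

def shadowError (z : X) (y : ℕ → X) (i : ℕ) : ℝ := dist (f^[i] z) (y i)

lemma stepError_nonneg (y : ℕ → X) : 0 ≤ stepError f y := fun _ => dist_nonneg

lemma shadowError_nonneg (z : X) (y : ℕ → X) : 0 ≤ shadowError f z y := fun _ => dist_nonneg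

lemma stepError_interpolate_block_end (hr : 0 < r) (hrk : r ≤ k) (i : ℕ) :
    stepError f (interpolate f x k r) (k * i + (k - 1)) = dist (f^[r] (x i)) (x (i + 1)) := by
  have hnext : k * i + (k - 1) + 1 = k * (i + 1) := by rw [Nat.mul_succ]; omega
  rw [stepError, hnext, interpolate_mul f x (by omega) hrk, interpolate_mul_add f x (by omega),
    ← Function.iterate_succ_apply' f, show (k - 1 + r - k).succ = r by omega]

lemma sum_stepError_interpolate_self (hk : 0 < k) (i : ℕ) :
    ∑ s ∈ range k, stepError f (interpolate f x k k) (k * i + s) = stepError (f^[k]) x i := by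
  obtain ⟨m, rfl⟩ : ∃ m, k = m + 1 := ⟨k - 1, by omega⟩
  rw [sum_range_succ, sum_eq_zero fun s hs => ?_]
  · have hend := stepError_interpolate_block_end f x hk le_rfl i
    rw [zero_add]
    rwa [Nat.add_sub_cancel] at hend
  · have hs : s + 1 < m + 1 := by simpa using hs
    rw [stepError, interpolate_mul_add f x (by omega), add_assoc,
      interpolate_mul_add f x hs, ← Function.iterate_succ_apply' f,
      show (s + (m + 1) - (m + 1)).succ = s + 1 + (m + 1) - (m + 1) by omega, dist_self]

variable {f x}

lemma cesaroBounded_dist_succ {g : X → X} (hW : ∀ z, CesaroBounded (shadowError g z x)) :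
    CesaroBounded fun i => dist (x i) (x (i + 1)) := by
  refine ((hW (g (x 0))).add ((hW (x 0)).comp_succ (shadowError_nonneg g _ x))).mono fun i => ?_
  have horbit : g^[i] (g (x 0)) = g^[i + 1] (x 0) := (Function.iterate_succ_apply g i _).symm
  simp only [Pi.add_apply, shadowError, horbit]
  exact dist_triangle_left _ _ _

lemma not_cesaroBounded_stepError_interpolate (hr : 0 < r) (hrk : r ≤ k)
    (hx : CesaroBounded fun i => dist (x i) (x (i + 1)))
    (hD : ¬ CesaroBounded fun i => dist (x i) (f^[r] (x i))) :
    ¬ CesaroBounded (stepError f (interpolate f x k r)) := by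
  intro h
  refine hD (((h.comp_mul_add (stepError_nonneg f _) (by omega : k - 1 < k)).add hx).mono
    fun i => ?_)
  rw [Pi.add_apply, stepError_interpolate_block_end f x hr hrk, add_comm]
  exact dist_triangle_right _ _ _

lemma limsup_stepError_interpolate_self_lt (hk : 0 < k) {δ : ℝ} (hδ : 0 < δ)
    (hx : limsup (cesaroMean (stepError (f^[k]) x)) atTop < δ) :
    limsup (cesaroMean (stepError f (interpolate f x k k))) atTop < δ := by
  have hblocks (n : ℕ) :
      ∑ i ∈ range n, ∑ s ∈ range k, stepError f (interpolate f x k k) (k * i + s)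
        = ∑ i ∈ range n, stepError (f^[k]) x i :=
    sum_congr rfl fun i _ => sum_stepError_interpolate_self f x hk i
  by_cases hb : CesaroBounded (stepError (f^[k]) x)
  · have hle (n : ℕ) : ∑ j ∈ range n, stepError f (interpolate f x k k) j
        ≤ ∑ i ∈ range (1 * n), stepError (f^[k]) x i := by
      rw [one_mul, ← hblocks]
      exact sum_range_le_sum_blocks (stepError_nonneg f _) hk n
    simpa using limsup_cesaroMean_lt_mul (stepError_nonneg f _) hb one_pos hle hx
  · refine (limsup_cesaroMean_of_not_cesaroBounded fun h =>
      hb (h.of_sum_le hk fun n => ?_)).trans_lt hδ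
    rw [← hblocks, sum_range_mul_eq_sum_blocks]

lemma cesaroBounded_shadowError_interpolate (hk : 0 < k) (hr : 0 < r)
    (hW : ∀ z, CesaroBounded (shadowError (f^[k]) z x))
    (hD : ∀ m < r, CesaroBounded fun i => dist (x i) (f^[m] (x i))) (z : X) :
    CesaroBounded (shadowError f z (interpolate f x k r)) := by
  refine cesaroBounded_of_forall_residue (shadowError_nonneg f z _) hk fun s hs =>
    ((hW (f^[s] z)).add (hD (s + r - k) (by omega))).mono fun i => ?_
  rw [shadowError, interpolate_mul_add f x hs, Function.iterate_add_apply,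
    Function.iterate_mul]
  exact dist_triangle _ _ _

lemma limsup_shadowError_iterate_lt (hk : 0 < k) (hrk : r ≤ k) {z : X}
    (hz : CesaroBounded (shadowError f z (interpolate f x k r))) {ε : ℝ}
    (hε : limsup (cesaroMean (shadowError f z (interpolate f x k r))) atTop < ε) :
    limsup (cesaroMean (shadowError (f^[k]) z x)) atTop < k * ε := by
  refine limsup_cesaroMean_lt_mul (shadowError_nonneg _ z x) hz hk (fun n => ?_) hε
  refine le_of_eq_of_le (sum_congr rfl fun i _ => ?_) (sum_comp_mul_add_le
    (shadowError_nonneg f z _) hk n)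
  rw [shadowError, shadowError, add_zero, interpolate_mul f x hk hrk, Function.iterate_mul]

lemma exists_interpolate_limsup_stepError_lt (hk : 0 < k) {δ : ℝ} (hδ : 0 < δ)
    (hW : ∀ z, CesaroBounded (shadowError (f^[k]) z x))
    (hx : limsup (cesaroMean (stepError (f^[k]) x)) atTop < δ) :
    ∃ r, 0 < r ∧ r ≤ k ∧ (∀ m < r, CesaroBounded fun i => dist (x i) (f^[m] (x i))) ∧
      limsup (cesaroMean (stepError f (interpolate f x k r))) atTop < δ := by
  classical
  by_cases hD : ∀ m < k, CesaroBounded fun i => dist (x i) (f^[m] (x i))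
  · exact ⟨k, hk, le_rfl, hD, limsup_stepError_interpolate_self_lt hk hδ hx⟩
  push Not at hD
  obtain ⟨hrk, hr⟩ := Nat.find_spec hD
  have hr0 : Nat.find hD ≠ 0 := fun h0 => by
    rw [h0] at hr
    exact hr (cesaroBounded_zero.mono fun i => by simp)
  refine ⟨Nat.find hD, by omega, hrk.le, fun m hm => ?_, ?_⟩
  · by_contra h
    exact Nat.find_min hD hm ⟨by omega, h⟩
  · exact (limsup_cesaroMean_of_not_cesaroBounded (not_cesaroBounded_stepError_interpolate
      (by omega) hrk.le (cesaroBounded_dist_succ hW) hr)).trans_lt hδ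

end Interpolation

theorem stmt8_general {X : Type*} [MetricSpace X] (f : X → X)
    (h : ALASP f) : ∀ k : ℕ, 1 < k → ALASP (f^[k]) := by
  intro k hk ε hε
  have hk0 : 0 < k := by omega
  obtain ⟨δ, hδ, hshadow⟩ := h (ε / k) (by positivity)
  refine ⟨δ, hδ, fun x hx => ?_⟩
  by_cases hW : ∀ z, CesaroBounded (shadowError (f^[k]) z x)
  · obtain ⟨r, hr, hrk, hD, hy⟩ := exists_interpolate_limsup_stepError_lt hk0 hδ hW hx
    obtain ⟨z, hz⟩ := hshadow _ hy
    refine ⟨z, (limsup_shadowError_iterate_lt hk0 hrk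
      (cesaroBounded_shadowError_interpolate hk0 hr hW hD z) hz).trans_eq ?_⟩
    field_simp
  · push Not at hW
    obtain ⟨z, hz⟩ := hW
    exact ⟨z, (limsup_cesaroMean_of_not_cesaroBounded hz).trans_lt hε⟩

theorem stmt8 {X : Type*} [MetricSpace X] (f : X → X) (hf : Continuous f)
    (h : ALASP f) : ∀ k : ℕ, 1 < k → ALASP (f^[k]) :=
  stmt8_general f h
end

section
/- If X is a compact metric space and f : X → X is a continuous surjection with the almost average shadowing property, then f is chain transitive; in particular, the chain recurrent set of f equals X. -/
open Filter Finset

/-!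
Given `x`, `y` and `δ`, concatenate blocks of doubling length `M 2^k` which alternately follow the
forward orbit of `x` and a backward orbit of `y` ending at `y`. This pseudo-orbit jumps only at
block boundaries, so its average jump is at most `diam X / M`, as small as we like. Each block
fills at least half of the initial segment it ends, so a point `z` that shadows the pseudo-orbit
in average comes close to it inside every late block. Following the orbit of `x` up to a close
point of an `x`-block, then the orbit of `z` up to a close point of a later `y`-block, then the
backward orbit to `y`, is a `δ`-chain from `x` to `y`; uniform continuity of `f` absorbs the
first jump.
-/

section Chains
variable {X : Type*} [PseudoMetricSpace X] {f : X → X} {δ : ℝ} {x y z : X} {m n : ℕ}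

theorem isChain.append (hxy : isChain f δ x y n) (hyz : isChain f δ y z m) :
    isChain f δ x z (n + m) := by
  obtain ⟨c, hc0, hcn, hc⟩ := hxy
  obtain ⟨d, hd0, hdm, hd⟩ := hyz
  refine ⟨fun t => if t ≤ n then c t else d (t - n), by simp [hc0], ?_, fun t ht => ?_⟩
  · rcases m.eq_zero_or_pos with rfl | hm
    · simp [hcn, ← hd0, hdm]
    · simp [show ¬ n + m ≤ n by omega, hdm]
  · by_cases htn : t < n
    · simpa [htn.le, Nat.succ_le_of_lt htn] using hc t htn
    · have hdt := hd (t - n) (by omega)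
      rw [show t - n + 1 = t + 1 - n by omega] at hdt
      rcases (not_lt.1 htn).eq_or_lt with rfl | hnt
      · simpa [hcn, ← hd0] using hdt
      · simpa [hnt.not_ge, show ¬ t + 1 ≤ n by omega] using hdt

theorem isChain_iterate (hδ : 0 < δ) (x : X) (n : ℕ) : isChain f δ x (f^[n] x) n :=
  ⟨fun t => f^[t] x, rfl, rfl, fun t _ => by simpa [← Function.iterate_succ_apply' f] using hδ⟩

theorem isChain_of_dist_iterate_lt (hδ : 0 < δ) (hn : 0 < n) (h : dist (f^[n] x) y < δ) :
    isChain f δ x y n := by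
  obtain ⟨k, rfl⟩ := Nat.exists_eq_add_of_lt hn
  have hstep : isChain f δ (f^[k] x) y 1 :=
    ⟨fun t => if t = 0 then f^[k] x else y, by simp, by simp, fun t ht => by
      simpa [Nat.lt_one_iff.1 ht, ← Function.iterate_succ_apply' f] using h⟩
  simpa using (isChain_iterate hδ x k).append hstep

end Chains

section Averages
variable {a : ℕ → ℝ} {B ε : ℝ}

theorem isBoundedUnder_le_sum_range_div (ha : ∀ i, a i ≤ B) (hB : 0 ≤ B) :
    IsBoundedUnder (· ≤ ·) atTop (fun n : ℕ => (∑ i ∈ range n, a i) / n) := by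
  refine isBoundedUnder_of ⟨B, fun n => ?_⟩
  rcases n.eq_zero_or_pos with rfl | hn
  · simpa using hB
  · rw [div_le_iff₀ (by exact_mod_cast hn)]
    simpa [mul_comm] using sum_le_sum fun i (_ : i ∈ range n) => ha i

theorem isCoboundedUnder_le_sum_range_div (ha : ∀ i, 0 ≤ a i) :
    IsCoboundedUnder (· ≤ ·) atTop (fun n : ℕ => (∑ i ∈ range n, a i) / n) :=
  isCoboundedUnder_le_of_le atTop fun n => div_nonneg (sum_nonneg fun i _ => ha i) n.cast_nonneg

theorem exists_mem_Ico_lt_of_sum_range_lt {m n : ℕ} (ha : ∀ i, 0 ≤ a i)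
    (h : ∑ i ∈ range n, a i < (n - m : ℕ) * ε) : ∃ i ∈ Ico m n, a i < ε := by
  refine exists_lt_of_sum_lt (lt_of_le_of_lt ?_ (h.trans_eq (by simp)))
  exact sum_le_sum_of_subset_of_nonneg (fun i hi => mem_range.2 (mem_Ico.1 hi).2)
    fun i _ _ => ha i

end Averages

/-- Block `k` of the pseudo-orbit is `[M (2^k - 1), M (2^(k+1) - 1))`; it has length `M 2^k`. -/
def blockStart (M k : ℕ) : ℕ := M * (2 ^ k - 1)

def blockIndex (M i : ℕ) : ℕ := Nat.log 2 (i / M + 1)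

section Blocks
variable {M i k : ℕ}

theorem blockStart_succ (M k : ℕ) : blockStart M (k + 1) = 2 * blockStart M k + M := by
  have h : 2 ^ (k + 1) - 1 = 2 * (2 ^ k - 1) + 1 := by
    have := Nat.one_le_two_pow (n := k)
    rw [pow_succ]; omega
  rw [blockStart, blockStart, h]; ring

theorem le_blockStart (hM : 0 < M) (k : ℕ) : k ≤ blockStart M k := by
  induction k with
  | zero => exact Nat.zero_le _
  | succ k ih => rw [blockStart_succ]; omega

theorem blockIndex_eq_iff (hM : 0 < M) :
    blockIndex M i = k ↔ blockStart M k ≤ i ∧ i < blockStart M (k + 1) := by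
  rw [blockIndex, Nat.log_eq_iff (Or.inr ⟨one_lt_two, Nat.succ_ne_zero _⟩), blockStart, blockStart,
    mul_comm M, mul_comm M, ← Nat.le_div_iff_mul_le hM, ← Nat.div_lt_iff_lt_mul hM]
  have := Nat.one_le_two_pow (n := k)
  have := Nat.one_le_two_pow (n := k + 1)
  omega

theorem blockStart_blockIndex_le (hM : 0 < M) (i : ℕ) : blockStart M (blockIndex M i) ≤ i :=
  ((blockIndex_eq_iff hM).1 rfl).1

theorem lt_blockStart_blockIndex_succ (hM : 0 < M) (i : ℕ) :
    i < blockStart M (blockIndex M i + 1) :=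
  ((blockIndex_eq_iff hM).1 rfl).2

theorem blockIndex_succ (hM : 0 < M) (h : ∀ t, i + 1 ≠ blockStart M t) :
    blockIndex M (i + 1) = blockIndex M i := by
  have h₁ := blockStart_blockIndex_le hM i
  have h₂ := lt_blockStart_blockIndex_succ hM i
  have h₃ := h (blockIndex M i + 1)
  exact (blockIndex_eq_iff hM).2 ⟨by omega, by omega⟩

theorem mem_image_blockStart_sub_one (hM : 0 < M) {n t : ℕ} (hi : i < n)
    (ht : i + 1 = blockStart M t) : i ∈ (Icc 1 (n / M)).image fun t => blockStart M t - 1 := by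
  refine mem_image.2 ⟨t, mem_Icc.2 ⟨?_, ?_⟩, by omega⟩
  · rcases t with _ | t
    · simp [blockStart] at ht
    · omega
  · rw [Nat.le_div_iff_mul_le hM]
    have : t ≤ 2 ^ t - 1 := Nat.le_sub_one_of_lt t.lt_two_pow_self
    have : t * M ≤ blockStart M t := by rw [blockStart, mul_comm]; gcongr
    omega

end Blocks

theorem eventually_exists_blockIndex_eq_lt {a : ℕ → ℝ} {B ε : ℝ} {M : ℕ} (hM : 0 < M)
    (ha : ∀ i, 0 ≤ a i) (haB : ∀ i, a i ≤ B)
    (h : atTop.limsup (fun n : ℕ => (∑ i ∈ range n, a i) / n) < ε / 2) :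
    ∀ᶠ k in atTop, ∃ i, blockIndex M i = k ∧ a i < ε := by
  obtain ⟨N, hN⟩ := eventually_atTop.1 (eventually_lt_of_limsup_lt h
    (isBoundedUnder_le_sum_range_div haB ((ha 0).trans (haB 0))))
  refine eventually_atTop.2 ⟨N, fun k hk => ?_⟩
  set m := blockStart M k
  set n := blockStart M (k + 1)
  have hkn : k + 1 ≤ n := le_blockStart hM (k + 1)
  have hn : (0 : ℝ) < n := by exact_mod_cast (show 0 < n by omega)
  have hhalf : (n : ℝ) ≤ 2 * (n - m : ℕ) := by
    have := blockStart_succ M k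
    exact_mod_cast (show n ≤ 2 * (n - m) by omega)
  have hsum_nonneg : 0 ≤ ∑ i ∈ range n, a i := sum_nonneg fun i _ => ha i
  have hlt := (div_lt_iff₀ hn).1 (hN n (by omega))
  obtain ⟨i, hi, hai⟩ := exists_mem_Ico_lt_of_sum_range_lt ha (m := m) (ε := ε) (by nlinarith)
  exact ⟨i, (blockIndex_eq_iff hM).2 (mem_Ico.1 hi), hai⟩

/-- Even blocks follow the forward orbit of `x`; odd blocks run through the backward orbit
`s^[n] y` of `y` (for a right inverse `s` of `f`) so as to arrive at `y` at the end of the block. -/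
def blockPseudoOrbit {X : Type*} (f s : X → X) (x y : X) (M i : ℕ) : X :=
  if Even (blockIndex M i) then f^[i - blockStart M (blockIndex M i)] x
  else s^[blockStart M (blockIndex M i + 1) - 1 - i] y

section BlockPseudoOrbit
variable {X : Type*} {f s : X → X} {x y : X} {M i k : ℕ}

theorem blockPseudoOrbit_of_even (hi : blockIndex M i = k) (hk : Even k) :
    blockPseudoOrbit f s x y M i = f^[i - blockStart M k] x := by
  rw [blockPseudoOrbit, hi, if_pos hk]

theorem blockPseudoOrbit_of_not_even (hi : blockIndex M i = k) (hk : ¬ Even k) :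
    blockPseudoOrbit f s x y M i = s^[blockStart M (k + 1) - 1 - i] y := by
  rw [blockPseudoOrbit, hi, if_neg hk]

theorem blockPseudoOrbit_succ (hs : Function.RightInverse s f) (hM : 0 < M)
    (h : ∀ t, i + 1 ≠ blockStart M t) :
    blockPseudoOrbit f s x y M (i + 1) = f (blockPseudoOrbit f s x y M i) := by
  have h₁ := blockStart_blockIndex_le hM i
  have h₂ := lt_blockStart_blockIndex_succ hM i
  have h₃ := h (blockIndex M i + 1)
  by_cases hk : Even (blockIndex M i)
  · rw [blockPseudoOrbit_of_even (blockIndex_succ hM h) hk, blockPseudoOrbit_of_even rfl hk,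
      ← Function.iterate_succ_apply' f]
    congr 1; omega
  · rw [blockPseudoOrbit_of_not_even (blockIndex_succ hM h) hk,
      blockPseudoOrbit_of_not_even rfl hk,
      show blockStart M (blockIndex M i + 1) - 1 - i
        = (blockStart M (blockIndex M i + 1) - 1 - (i + 1)) + 1 by omega,
      Function.iterate_succ_apply', hs]

variable [PseudoMetricSpace X] {B : ℝ}

theorem sum_range_dist_blockPseudoOrbit_le (hs : Function.RightInverse s f) (hM : 0 < M)
    (hB : ∀ u v : X, dist u v ≤ B) (n : ℕ) :
    ∑ i ∈ range n, dist (f (blockPseudoOrbit f s x y M i)) (blockPseudoOrbit f s x y M (i + 1))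
      ≤ (n / M : ℕ) * B := by
  set J := (Icc 1 (n / M)).image fun t => blockStart M t - 1
  have hB0 : 0 ≤ B := (dist_nonneg (x := x) (y := x)).trans (hB x x)
  calc _ ≤ ∑ i ∈ range n, if i ∈ J then B else 0 := by
        refine sum_le_sum fun i hi => ?_
        split_ifs with hJ
        · exact hB _ _
        · have hjump : ∀ t, i + 1 ≠ blockStart M t := fun t ht =>
            hJ (mem_image_blockStart_sub_one hM (mem_range.1 hi) ht)
          simp [blockPseudoOrbit_succ hs hM hjump]
    _ = #(range n ∩ J) * B := by rw [sum_ite_mem, sum_const, nsmul_eq_mul]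
    _ ≤ #J * B := by gcongr; exact inter_subset_right
    _ ≤ (n / M : ℕ) * B := by gcongr; exact_mod_cast card_image_le.trans (by simp)

theorem limsup_avg_dist_blockPseudoOrbit_le (hs : Function.RightInverse s f) (hM : 0 < M)
    (hB : ∀ u v : X, dist u v ≤ B) :
    atTop.limsup (fun n : ℕ => (∑ i ∈ range n,
      dist (f (blockPseudoOrbit f s x y M i)) (blockPseudoOrbit f s x y M (i + 1))) / n)
      ≤ B / M := by
  refine limsup_le_of_le (isCoboundedUnder_le_sum_range_div fun _ => dist_nonneg)
    (Eventually.of_forall fun n => ?_)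
  have hB0 : 0 ≤ B := (dist_nonneg (x := x) (y := x)).trans (hB x x)
  rcases n.eq_zero_or_pos with rfl | hn
  · simpa using div_nonneg hB0 M.cast_nonneg
  rw [div_le_iff₀ (by exact_mod_cast hn)]
  calc _ ≤ ((n / M : ℕ) : ℝ) * B := sum_range_dist_blockPseudoOrbit_le hs hM hB n
    _ ≤ (n / M : ℝ) * B := by gcongr; exact Nat.cast_div_le
    _ = B / M * n := by ring

end BlockPseudoOrbit

section ChainTransitive
variable {X : Type*} [PseudoMetricSpace X] {f s : X → X} {x y z : X} {δ : ℝ} {M i j k : ℕ}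

theorem exists_isChain_of_close_blockPseudoOrbit (hs : Function.RightInverse s f) (hM : 0 < M)
    (hδ : 0 < δ) (hi : blockIndex M i = k) (hk : Even k) (hj : blockIndex M j = k + 3)
    (hiz : dist (f (blockPseudoOrbit f s x y M i)) (f^[i + 1] z) < δ)
    (hjz : dist (f^[j] z) (blockPseudoOrbit f s x y M j) < δ) :
    ∃ n, 0 < n ∧ isChain f δ x y n := by
  have hodd : ¬ Even (k + 3) := by simp [Nat.even_add, hk]; decide
  rw [blockPseudoOrbit_of_even hi hk, ← Function.iterate_succ_apply' f] at hiz
  rw [blockPseudoOrbit_of_not_even hj hodd] at hjz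
  set b := blockStart M (k + 3 + 1) - 1 - j
  have hij : i + 2 ≤ j := by
    have hi' := ((blockIndex_eq_iff hM).1 hi).2
    have hj' := ((blockIndex_eq_iff hM).1 hj).1
    have h₂ : blockStart M (k + 2) = 2 * blockStart M (k + 1) + M := blockStart_succ M (k + 1)
    have h₃ : blockStart M (k + 3) = 2 * blockStart M (k + 2) + M := blockStart_succ M (k + 2)
    omega
  have hxz : isChain f δ x (f^[i + 1] z) _ := isChain_of_dist_iterate_lt hδ (Nat.succ_pos _) hiz
  have hzs : isChain f δ (f^[i + 1] z) (s^[b] y) (j - (i + 1)) :=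
    isChain_of_dist_iterate_lt hδ (by omega) (by
      rwa [← Function.iterate_add_apply, Nat.sub_add_cancel (by omega)])
  have hsy : isChain f δ (s^[b] y) y b := by
    simpa only [hs.iterate b y] using isChain_iterate (f := f) hδ (s^[b] y) b
  exact ⟨_, by omega, (hxz.append hzs).append hsy⟩

theorem chainTransitive_of_ALASP [CompactSpace X] (hf : Continuous f)
    (hsurj : Function.Surjective f) (h : ALASP f) : chainTransitive f := by
  intro δ hδ x y
  obtain ⟨ε, hε, hUC⟩ :=
    Metric.uniformContinuous_iff.1 (CompactSpace.uniformContinuous_of_continuous hf) δ hδ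
  obtain ⟨δ₀, hδ₀, hshadow⟩ := h (min ε δ / 2) (by positivity)
  have hB : ∀ u v : X, dist u v ≤ Metric.diam (Set.univ : Set X) := fun u v =>
    Metric.dist_le_diam_of_mem isCompact_univ.isBounded trivial trivial
  obtain ⟨M, hM⟩ := exists_nat_gt (Metric.diam (Set.univ : Set X) / δ₀)
  have hM0 : 0 < M := by exact_mod_cast (div_nonneg Metric.diam_nonneg hδ₀.le).trans_lt hM
  have hs := Function.rightInverse_surjInv hsurj
  obtain ⟨z, hz⟩ := hshadow (blockPseudoOrbit f (Function.surjInv hsurj) x y M)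
    ((limsup_avg_dist_blockPseudoOrbit_le hs hM0 hB).trans_lt
      ((div_lt_iff₀ (by positivity)).2 (by rwa [div_lt_iff₀ hδ₀, mul_comm] at hM)))
  have hgood := eventually_exists_blockIndex_eq_lt hM0 (fun _ => dist_nonneg) (fun _ => hB _ _) hz
  obtain ⟨K, hK⟩ := eventually_atTop.1 (hgood.and ((tendsto_add_atTop_nat 3).eventually hgood))
  obtain ⟨⟨i, hi, hiz⟩, ⟨j, hj, hjz⟩⟩ := hK (2 * K) (by omega)
  refine exists_isChain_of_close_blockPseudoOrbit hs hM0 hδ hi (even_two_mul K) hj ?_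
    (hjz.trans_le (min_le_right _ _))
  rw [Function.iterate_succ_apply', dist_comm]
  exact hUC (hiz.trans_le (min_le_left _ _))

end ChainTransitive

theorem stmt10 {X : Type*} [MetricSpace X] [CompactSpace X] (f : X → X)
    (hf : Continuous f) (hs : Function.Surjective f) (h : ALASP f) :
    chainTransitive f ∧ ∀ x : X, chainRecurrent f x := by
  have hct := chainTransitive_of_ALASP hf hs h
  exact ⟨hct, fun x δ hδ => ⟨hct δ hδ x x, hct δ hδ x x⟩⟩
end

section
/- If X is a compact metric space and f : X → X has the almost average shadowing property, then the chain recurrent set CR(f) consists of a single chain component; that is, any two chain recurrent points of f are chain equivalent. -/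
open Filter Finset

/-!
Fix `x`, `y` and `δ > 0`. The pseudo-orbit that alternately follows the orbits of `x` and of `y`
for `L` steps jumps only once every `L` steps, so its average jump is at most `diam X / L`, and
for large `L` it is shadowed in average by the orbit of some `z`. An average error below `δ / 8`
cannot stay `≥ δ` on a set of indices of density `≥ 1/4`, so the orbit of `z` is `δ`-close to
the pseudo-orbit at some time `i` in an `x`-block and at a later time `j` in a `y`-block.
Following the orbit of `x`, then that of `z` from time `i` to time `j`, gives a `δ`-chain from
`x` to some `f^[k] y`; if `y` is chain recurrent and `f` uniformly continuous, each `f^[k] y`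
chains back to `y`.
-/

open Relation

section Chains
variable {X : Type*} [PseudoMetricSpace X] {f : X → X} {δ : ℝ}

def chainStep (f : X → X) (δ : ℝ) (a b : X) : Prop := dist (f a) b < δ

lemma chainStep_mono {δ' : ℝ} (h : δ ≤ δ') : chainStep f δ ≤ chainStep f δ' :=
  fun _ _ hab => hab.trans_le h

lemma isChain_zero_iff {x y : X} : isChain f δ x y 0 ↔ x = y :=
  ⟨fun ⟨c, h0, h1, _⟩ => h0 ▸ h1, fun h => ⟨fun _ => x, rfl, h, by simp⟩⟩

lemma isChain_succ_iff {x y : X} {n : ℕ} :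
    isChain f δ x y (n + 1) ↔ ∃ w, chainStep f δ x w ∧ isChain f δ w y n := by
  constructor
  · rintro ⟨c, h0, hn, hc⟩
    exact ⟨c 1, h0 ▸ hc 0 n.succ_pos, fun i => c (i + 1), rfl, hn,
      fun i hi => hc (i + 1) (by omega)⟩
  · rintro ⟨w, hxw, c, h0, hn, hc⟩
    refine ⟨fun i => Nat.casesOn i x c, rfl, hn, fun i hi => ?_⟩
    cases i with
    | zero => subst h0; exact hxw
    | succ i => exact hc i (by omega)

lemma isChain_iff_reflTransGen {x y : X} :
    (∃ n, isChain f δ x y n) ↔ ReflTransGen (chainStep f δ) x y := by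
  constructor
  · rintro ⟨n, hn⟩
    induction n generalizing x with
    | zero => exact isChain_zero_iff.1 hn ▸ .refl
    | succ n ih =>
      obtain ⟨w, hxw, hwy⟩ := isChain_succ_iff.1 hn
      exact .head hxw (ih hwy)
  · intro h
    induction h using ReflTransGen.head_induction_on with
    | refl => exact ⟨0, isChain_zero_iff.2 rfl⟩
    | head hxw _ ih =>
      obtain ⟨n, hn⟩ := ih
      exact ⟨n + 1, isChain_succ_iff.2 ⟨_, hxw, hn⟩⟩

lemma exists_pos_isChain_iff_transGen {x y : X} :
    (∃ n, 0 < n ∧ isChain f δ x y n) ↔ TransGen (chainStep f δ) x y := by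
  rw [TransGen.head'_iff]
  constructor
  · rintro ⟨_ | n, hn, hc⟩
    · exact absurd hn (lt_irrefl 0)
    · obtain ⟨w, hxw, hwy⟩ := isChain_succ_iff.1 hc
      exact ⟨w, hxw, isChain_iff_reflTransGen.1 ⟨n, hwy⟩⟩
  · rintro ⟨w, hxw, hwy⟩
    obtain ⟨n, hn⟩ := isChain_iff_reflTransGen.2 hwy
    exact ⟨n + 1, n.succ_pos, isChain_succ_iff.2 ⟨w, hxw, hn⟩⟩

lemma chainEquivalent_iff_transGen {x y : X} :
    chainEquivalent f x y ↔
      ∀ δ > 0, TransGen (chainStep f δ) x y ∧ TransGen (chainStep f δ) y x := by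
  simp only [chainEquivalent, exists_pos_isChain_iff_transGen]

lemma reflTransGen_chainStep_iterate (f : X → X) (hδ : 0 < δ) (x : X) (k : ℕ) :
    ReflTransGen (chainStep f δ) x (f^[k] x) := by
  induction k with
  | zero => exact .refl
  | succ k ih =>
    refine ih.tail ?_
    rwa [chainStep, ← Function.iterate_succ_apply' f, dist_self]

end Chains

section Recurrence
variable {X : Type*} [PseudoMetricSpace X] {f : X → X}

lemma transGen_chainStep_apply_self (hf : UniformContinuous f) {u : X}
    (hu : ∀ δ > 0, TransGen (chainStep f δ) u u) {δ : ℝ} (hδ : 0 < δ) :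
    TransGen (chainStep f δ) (f u) u := by
  obtain ⟨β, hβ, hfβ⟩ := Metric.uniformContinuous_iff.1 hf (δ / 2) (half_pos hδ)
  set γ := min β (δ / 2)
  have hγ : 0 < γ := lt_min hβ (half_pos hδ)
  have huu := hu γ hγ
  obtain ⟨w₁, huw₁, hw₁u⟩ := TransGen.head'_iff.1 huu
  -- Appending the loop once more guarantees a second step `w₁ → w₂`.
  obtain ⟨w₂, hw₁w₂, hw₂u⟩ := TransGen.head'_iff.1 (TransGen.trans_right hw₁u huu)
  have hstep : chainStep f δ (f u) w₂ :=
    calc dist (f (f u)) w₂ ≤ dist (f (f u)) (f w₁) + dist (f w₁) w₂ := dist_triangle _ _ _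
      _ < δ / 2 + δ / 2 := add_lt_add (hfβ (lt_of_lt_of_le huw₁ (min_le_left _ _)))
          (lt_of_lt_of_le hw₁w₂ (min_le_right _ _))
      _ = δ := add_halves δ
  have hγδ : γ ≤ δ := (min_le_right _ _).trans (half_le_self hδ.le)
  exact TransGen.head' hstep (ReflTransGen.mono (chainStep_mono hγδ) _ _ hw₂u)

lemma transGen_chainStep_iterate_self (hf : UniformContinuous f) {u : X}
    (hu : ∀ δ > 0, TransGen (chainStep f δ) u u) (k : ℕ) {δ : ℝ} (hδ : 0 < δ) :
    TransGen (chainStep f δ) (f^[k] u) u := by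
  induction k generalizing δ with
  | zero => exact hu δ hδ
  | succ k ih =>
    have hrec : ∀ δ > 0, TransGen (chainStep f δ) (f^[k] u) (f^[k] u) := fun δ hδ =>
      (ih hδ).trans_left (reflTransGen_chainStep_iterate f hδ u k)
    rw [Function.iterate_succ_apply']
    exact (transGen_chainStep_apply_self hf hrec hδ).trans (ih hδ)

end Recurrence

lemma sum_range_div_le {g : ℕ → ℝ} {C : ℝ} (hC : 0 ≤ C) (hgC : ∀ i, g i ≤ C)
    (n : ℕ) :
    (∑ i ∈ range n, g i) / n ≤ C := by
  rcases n.eq_zero_or_pos with rfl | hn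
  · simpa using hC
  rw [div_le_iff₀ (by exact_mod_cast hn)]
  simpa [mul_comm] using sum_le_sum fun i (_ : i ∈ range n) => hgC i

lemma exists_mod_mem_lt_of_limsup_lt {g : ℕ → ℝ} {C β : ℝ} {p : ℕ} {W : Finset ℕ}
    (hp : 0 < p) (hW : W ⊆ range p) (hg0 : ∀ i, 0 ≤ g i) (hgC : ∀ i, g i ≤ C)
    (hlim : limsup (fun n : ℕ => (∑ i ∈ range n, g i) / n) atTop < β * #W / (2 * p))
    (M : ℕ) : ∃ i ≥ M, i % p ∈ W ∧ g i < β := by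
  by_contra! hbig
  have hC : 0 ≤ C := (hg0 0).trans (hgC 0)
  obtain ⟨N, hN⟩ := eventually_atTop.1 <|
    eventually_lt_of_limsup_lt hlim (isBoundedUnder_of ⟨C, sum_range_div_le hC hgC⟩)
  set m := M + N + 1
  have hblock : ∀ q ≥ m, #W * β ≤ ∑ j ∈ range p, g (p * q + j) := fun q hq =>
    calc #W * β = ∑ _j ∈ W, β := by simp
      _ ≤ ∑ j ∈ W, g (p * q + j) := sum_le_sum fun j hj => by
          refine hbig _ ?_ ?_
          · have := Nat.le_mul_of_pos_left q hp
            omega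
          · rwa [Nat.mul_add_mod, Nat.mod_eq_of_lt (mem_range.1 (hW hj))]
      _ ≤ ∑ j ∈ range p, g (p * q + j) :=
          sum_le_sum_of_subset_of_nonneg hW fun _ _ _ => hg0 _
  have htail : ∀ k : ℕ, k * (#W * β) ≤ ∑ i ∈ range (p * (m + k)), g i := by
    intro k
    induction k with
    | zero => simpa using sum_nonneg fun i _ => hg0 i
    | succ k ih =>
      rw [show p * (m + (k + 1)) = p * (m + k) + p by ring, sum_range_add]
      push_cast
      linarith [hblock (m + k) (by omega)]
  have hn : N ≤ p * (m + m) := by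
    have := Nat.le_mul_of_pos_left (m + m) hp
    omega
  have hlt := hN _ hn
  rw [lt_div_iff₀ (by positivity), div_mul_eq_mul_div, div_lt_iff₀ (by positivity)] at hlt
  push_cast at hlt
  nlinarith [htail m]

section AlternatingOrbit
variable {X : Type*} {f : X → X} {x y : X}

def alternatingOrbit (f : X → X) (x y : X) (L i : ℕ) : X :=
  if i % (2 * L) < L then f^[i % (2 * L)] x else f^[i % (2 * L) - L] y

lemma apply_alternatingOrbit {L i : ℕ} (hi : ¬ L ∣ i + 1) :
    f (alternatingOrbit f x y L i) = alternatingOrbit f x y L (i + 1) := by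
  rcases L.eq_zero_or_pos with rfl | hL
  · simp [alternatingOrbit, Function.iterate_succ_apply']
  obtain ⟨q, r, hr, rfl⟩ : ∃ q r, r < 2 * L ∧ i = 2 * L * q + r :=
    ⟨i / (2 * L), i % (2 * L), Nat.mod_lt _ (by omega), (Nat.div_add_mod i (2 * L)).symm⟩
  rw [add_assoc, Nat.dvd_add_right (⟨2 * q, by ring⟩ : L ∣ 2 * L * q)] at hi
  have hr1 : r + 1 < 2 * L := by
    refine lt_of_le_of_ne hr fun h => hi ⟨2, ?_⟩
    omega
  have hrL : r + 1 ≠ L := fun h => hi (by rw [h])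
  simp only [alternatingOrbit, add_assoc, Nat.mul_add_mod, Nat.mod_eq_of_lt hr,
    Nat.mod_eq_of_lt hr1]
  split_ifs with h₁ h₂ h₂
  · exact (Function.iterate_succ_apply' f r x).symm
  · omega
  · omega
  · rw [show r + 1 - L = r - L + 1 by omega, Function.iterate_succ_apply']

variable [PseudoMetricSpace X]

lemma sum_range_dist_alternatingOrbit_le {D : ℝ} (hD : ∀ a b : X, dist a b ≤ D) (L n : ℕ) :
    ∑ i ∈ range n, dist (f (alternatingOrbit f x y L i)) (alternatingOrbit f x y L (i + 1))
      ≤ (n / L : ℕ) * D := by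
  rw [← sum_filter_of_ne (p := fun i => L ∣ i + 1), ← Nat.card_multiples n L,
    ← nsmul_eq_mul]
  · exact sum_le_card_nsmul _ _ _ fun i _ => hD _ _
  · intro i _ hne
    by_contra hi
    exact hne (by rw [apply_alternatingOrbit (f := f) (x := x) (y := y) hi, dist_self])

lemma limsup_avg_dist_alternatingOrbit_le {D : ℝ} (hD : ∀ a b : X, dist a b ≤ D) (L : ℕ) :
    limsup (fun n : ℕ => (∑ i ∈ range n,
      dist (f (alternatingOrbit f x y L i)) (alternatingOrbit f x y L (i + 1))) / n) atTop
      ≤ D / L := by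
  have hD0 : 0 ≤ D := dist_nonneg.trans (hD x x)
  refine limsup_le_of_le (isCoboundedUnder_le_of_le atTop fun n => by positivity)
    (Eventually.of_forall fun n => ?_)
  calc _ ≤ (n / L : ℕ) * D / n := by
        gcongr
        exact sum_range_dist_alternatingOrbit_le hD L n
    _ ≤ (n / L : ℝ) * D / n := by gcongr; exact Nat.cast_div_le
    _ ≤ D / L := by
        rcases n.eq_zero_or_pos with rfl | hn
        · rw [Nat.cast_zero, div_zero]
          positivity
        · rw [div_mul_eq_mul_div, div_div, mul_comm (L : ℝ), ← div_div, mul_div_cancel_left₀]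
          exact_mod_cast hn.ne'

lemma transGen_chainStep_of_dist_iterate_alternatingOrbit_lt {δ : ℝ} {L i j : ℕ} {z : X}
    (hi : 1 ≤ i % (2 * L) ∧ i % (2 * L) < L)
    (hdi : dist (f^[i] z) (alternatingOrbit f x y L i) < δ)
    (hij : i < j) (hj : L ≤ j % (2 * L))
    (hdj : dist (f^[j] z) (alternatingOrbit f x y L j) < δ) :
    TransGen (chainStep f δ) x (f^[j % (2 * L) - L] y) := by
  have hδ : 0 < δ := dist_nonneg.trans_lt hdi
  -- As `1 ≤ i % (2 * L)`, the pseudo-orbit at time `i` is an `f`-image, so jumping onto the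
  -- orbit of `z` needs no continuity of `f`.
  have hξi : alternatingOrbit f x y L i = f (f^[i % (2 * L) - 1] x) := by
    rw [← Function.iterate_succ_apply' f, Nat.succ_eq_add_one, Nat.sub_add_cancel hi.1]
    exact if_pos hi.2
  have hξj : alternatingOrbit f x y L j = f^[j % (2 * L) - L] y := if_neg (not_lt.2 hj)
  have hxz : TransGen (chainStep f δ) x (f^[i] z) :=
    .tail' (reflTransGen_chainStep_iterate f hδ x _) (by rwa [chainStep, ← hξi, dist_comm])
  have hzz : ReflTransGen (chainStep f δ) (f^[i] z) (f^[j - 1] z) := by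
    have := reflTransGen_chainStep_iterate f hδ (f^[i] z) (j - 1 - i)
    rwa [← Function.iterate_add_apply, Nat.sub_add_cancel (by omega)] at this
  refine (hxz.trans_left hzz).tail ?_
  rwa [chainStep, ← Function.iterate_succ_apply' f, Nat.succ_eq_add_one,
    Nat.sub_add_cancel (by omega), ← hξj]

end AlternatingOrbit

theorem ALASP.exists_transGen_chainStep_iterate {X : Type*} [PseudoMetricSpace X]
    [BoundedSpace X] {f : X → X} (h : ALASP f) (x y : X) {δ : ℝ} (hδ : 0 < δ) :
    ∃ k, TransGen (chainStep f δ) x (f^[k] y) := by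
  set D := Metric.diam (Set.univ : Set X)
  have hD : ∀ a b : X, dist a b ≤ D := fun a b =>
    Metric.dist_le_diam_of_mem BoundedSpace.bounded_univ (Set.mem_univ a) (Set.mem_univ b)
  obtain ⟨δ₀, hδ₀, hshadow⟩ := h (δ / 8) (by positivity)
  obtain ⟨L₀, hL₀⟩ := exists_nat_gt (D / δ₀)
  set L := L₀ + 2
  have hL : (2 : ℝ) ≤ L := by simp [L]
  have hDL : D / L < δ₀ := by
    rw [div_lt_iff₀ (by positivity)]
    have : (L₀ : ℝ) ≤ L := by simp [L]
    nlinarith [(div_lt_iff₀ hδ₀).1 hL₀]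
  obtain ⟨z, hz⟩ := hshadow (alternatingOrbit f x y L)
    ((limsup_avg_dist_alternatingOrbit_le hD L).trans_lt hDL)
  have hdist : ∀ W ⊆ range (2 * L), δ / 8 ≤ δ * #W / (2 * (2 * L : ℕ)) →
      ∀ M, ∃ i ≥ M, i % (2 * L) ∈ W ∧ dist (f^[i] z) (alternatingOrbit f x y L i) < δ :=
    fun W hW hWδ => exists_mod_mem_lt_of_limsup_lt (by omega) hW (fun _ => dist_nonneg)
      (fun _ => hD _ _) (hz.trans_le hWδ)
  obtain ⟨i, -, hiW, hi⟩ := hdist (Ico 1 L)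
    (fun _ => by simp only [mem_Ico, mem_range]; omega)
    (by
      rw [Nat.card_Ico, Nat.cast_sub (by omega), le_div_iff₀ (by positivity)]
      push_cast
      nlinarith) 0
  obtain ⟨j, hij, hjW, hj⟩ := hdist (Ico L (2 * L))
    (fun _ => by simp only [mem_Ico, mem_range]; omega)
    (by
      rw [Nat.card_Ico, show 2 * L - L = L by omega, le_div_iff₀ (by positivity)]
      push_cast
      nlinarith) (i + 1)
  exact ⟨_, transGen_chainStep_of_dist_iterate_alternatingOrbit_lt (mem_Ico.1 hiW) hi hij
    (mem_Ico.1 hjW).1 hj⟩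

theorem ALASP.transGen_chainStep_of_chainRecurrent {X : Type*} [PseudoMetricSpace X]
    [BoundedSpace X] {f : X → X} (h : ALASP f) (hf : UniformContinuous f) {y : X}
    (hy : chainRecurrent f y) (x : X) {δ : ℝ} (hδ : 0 < δ) :
    TransGen (chainStep f δ) x y := by
  obtain ⟨k, hxy⟩ := h.exists_transGen_chainStep_iterate x y hδ
  exact hxy.trans <| transGen_chainStep_iterate_self hf
    (fun δ hδ => (chainEquivalent_iff_transGen.1 hy δ hδ).1) k hδ

theorem stmt12 {X : Type*} [MetricSpace X] [CompactSpace X] (f : X → X)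
    (hf : Continuous f) (h : ALASP f) :
    ∀ x y : X, chainRecurrent f x → chainRecurrent f y → chainEquivalent f x y := by
  intro x y hx hy
  have hfu := CompactSpace.uniformContinuous_of_continuous hf
  exact chainEquivalent_iff_transGen.2 fun δ hδ =>
    ⟨h.transGen_chainStep_of_chainRecurrent hfu hy x hδ,
      h.transGen_chainStep_of_chainRecurrent hfu hx y hδ⟩
end

section
/- The cyclic permutation f of the two-point discrete metric space {a, b} given by f(a) = b, f(b) = a does not have the almost average shadowing property. -/
open Filter Finset

/-!
Let `f` be an isometry of a bounded space and `dist a b > 0`. Cut `ℕ` into the blocks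
`[2^k - 1, 2^(k+1) - 1)` and follow the orbit of `a` on the even blocks, that of `b` on the odd
ones. The only errors occur at block ends, so the average error up to time `n` is
`O(log n / n)`: this is an almost `δ`-average pseudo-orbit for every `δ > 0`. An orbit of `z` stays
at the constant distance `dist z a` (resp. `dist z b`) from it on even (odd) blocks, and block `k`
fills half of the time up to its end, so the shadowing average has limsup at least
`max (dist z a) (dist z b) / 2 ≥ dist a b / 4`.
-/

open Topology

theorem Isometry.iterate {X : Type*} [PseudoEMetricSpace X] {f : X → X} (hf : Isometry f) :
    ∀ n : ℕ, Isometry f^[n]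
  | 0 => isometry_id
  | n + 1 => (Isometry.iterate hf n).comp hf

theorem tendsto_natLog_succ_div_atTop (b : ℕ) :
    Tendsto (fun n : ℕ => (Nat.log b (n + 1) : ℝ) / n) atTop (𝓝 0) := by
  have hlogb : Tendsto (fun n : ℕ => Real.logb b (n + 1) / n) atTop (𝓝 0) := by
    have := (Real.tendsto_pow_logb_div_mul_add_atTop (b := b) 1 (-1) 1 one_ne_zero).comp
      (tendsto_atTop_add_const_right _ 1 tendsto_natCast_atTop_atTop)
    simpa [Function.comp_def] using this
  refine squeeze_zero (fun n => by positivity) (fun n => ?_) hlogb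
  gcongr
  exact_mod_cast Real.natLog_le_logb (n + 1) b

namespace AverageShadowing

variable {X : Type*}

-- Index `i` lies in block `k = Nat.log 2 (i + 1)`, i.e. `2 ^ k - 1 ≤ i < 2 ^ (k + 1) - 1`.
def blockOrbit (f : X → X) (a b : X) (i : ℕ) : X :=
  f^[i] (if Even (Nat.log 2 (i + 1)) then a else b)

theorem apply_blockOrbit_of_log_eq {f : X → X} {a b : X} {i : ℕ}
    (h : Nat.log 2 (i + 2) = Nat.log 2 (i + 1)) :
    f (blockOrbit f a b i) = blockOrbit f a b (i + 1) := by
  simp only [blockOrbit, ← h, Function.iterate_succ_apply']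

variable [PseudoMetricSpace X]

noncomputable def avgDist (u v : ℕ → X) (n : ℕ) : ℝ := (∑ i ∈ range n, dist (u i) (v i)) / n

theorem avgDist_le {u v : ℕ → X} {C : ℝ} (hC : ∀ i, dist (u i) (v i) ≤ C) (n : ℕ) :
    avgDist u v n ≤ max C 0 := by
  rcases Nat.eq_zero_or_pos n with rfl | hn
  · simp [avgDist]
  rw [avgDist, div_le_iff₀ (by exact_mod_cast hn)]
  calc ∑ i ∈ range n, dist (u i) (v i) ≤ ∑ _i ∈ range n, max C 0 :=
        sum_le_sum fun i _ => (hC i).trans (le_max_left C 0)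
    _ = max C 0 * n := by simp [mul_comm]

variable {f : X → X} {a b : X}

theorem dist_apply_blockOrbit_le {C : ℝ} (hC : ∀ x y : X, dist x y ≤ C) (i : ℕ) :
    dist (f (blockOrbit f a b i)) (blockOrbit f a b (i + 1)) ≤
      C * ((Nat.log 2 (i + 2) : ℝ) - Nat.log 2 (i + 1)) := by
  rcases (Nat.log_mono_right (b := 2) (by omega : i + 1 ≤ i + 2)).eq_or_lt with h | h
  · simp [apply_blockOrbit_of_log_eq h.symm, h]
  · have h1 : (1 : ℝ) ≤ (Nat.log 2 (i + 2) : ℝ) - Nat.log 2 (i + 1) := by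
      rw [le_sub_iff_add_le']; exact_mod_cast h
    calc _ ≤ C := hC _ _
      _ ≤ _ := le_mul_of_one_le_right (dist_nonneg.trans (hC a a)) h1

theorem sum_dist_apply_blockOrbit_le {C : ℝ} (hC : ∀ x y : X, dist x y ≤ C) (n : ℕ) :
    ∑ i ∈ range n, dist (f (blockOrbit f a b i)) (blockOrbit f a b (i + 1)) ≤
      C * Nat.log 2 (n + 1) := by
  calc _ ≤ ∑ i ∈ range n, C * ((Nat.log 2 (i + 2) : ℝ) - Nat.log 2 (i + 1)) :=
        sum_le_sum fun i _ => dist_apply_blockOrbit_le hC i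
    _ = C * Nat.log 2 (n + 1) := by
        rw [← mul_sum, sum_range_sub (fun i => (Nat.log 2 (i + 1) : ℝ))]
        simp

theorem tendsto_avgDist_blockOrbit {C : ℝ} (hC : ∀ x y : X, dist x y ≤ C) :
    Tendsto (avgDist (fun i => f (blockOrbit f a b i)) (fun i => blockOrbit f a b (i + 1)))
      atTop (𝓝 0) := by
  have hC0 : 0 ≤ C := dist_nonneg.trans (hC a a)
  refine squeeze_zero (fun n => by unfold avgDist; positivity) (fun n => ?_)
    (by simpa using (tendsto_natLog_succ_div_atTop 2).const_mul C)
  rw [avgDist, mul_div_assoc']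
  gcongr
  exact sum_dist_apply_blockOrbit_le hC n

theorem half_dist_le_avgDist_blockOrbit (hf : Isometry f) (z : X) (k : ℕ) :
    dist z (if Even k then a else b) / 2 ≤
      avgDist (fun i => f^[i] z) (blockOrbit f a b) (2 ^ (k + 1) - 1) := by
  set d := dist z (if Even k then a else b)
  set n := 2 ^ (k + 1) - 1
  have hk : 1 ≤ 2 ^ k := Nat.one_le_two_pow
  have hpow : 2 ^ (k + 1) = 2 * 2 ^ k := by ring
  have hblock : ∀ i ∈ Ico (2 ^ k - 1) n, dist (f^[i] z) (blockOrbit f a b i) = d := by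
    intro i hi
    rw [mem_Ico] at hi
    have hlog : Nat.log 2 (i + 1) = k := Nat.log_eq_of_pow_le_of_lt_pow (by omega) (by omega)
    rw [blockOrbit, hlog, (hf.iterate i).dist_eq]
  have hsum : (2 ^ k : ℝ) * d ≤ ∑ i ∈ range n, dist (f^[i] z) (blockOrbit f a b i) :=
    calc (2 ^ k : ℝ) * d = ∑ i ∈ Ico (2 ^ k - 1) n, dist (f^[i] z) (blockOrbit f a b i) := by
          rw [sum_congr rfl hblock, sum_const, Nat.card_Ico, nsmul_eq_mul,
            show n - (2 ^ k - 1) = 2 ^ k by omega]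
          push_cast; ring
      _ ≤ _ := sum_le_sum_of_subset_of_nonneg (fun i hi => mem_range.2 (mem_Ico.1 hi).2)
          fun _ _ _ => dist_nonneg
  have hn_le : (n : ℝ) ≤ 2 * 2 ^ k := by exact_mod_cast (show n ≤ 2 * 2 ^ k by omega)
  rw [avgDist, le_div_iff₀ (by exact_mod_cast (show 0 < n by omega))]
  calc d / 2 * n ≤ d / 2 * (2 * 2 ^ k) := by gcongr
    _ = 2 ^ k * d := by ring
    _ ≤ _ := hsum

theorem half_dist_le_limsup_avgDist_blockOrbit (hf : Isometry f) {C : ℝ}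
    (hC : ∀ x y : X, dist x y ≤ C) (z : X) {c : X} (hc : c = a ∨ c = b) :
    dist z c / 2 ≤ limsup (avgDist (fun i => f^[i] z) (blockOrbit f a b)) atTop := by
  refine le_limsup_of_frequently_le (frequently_atTop.2 fun m => ?_)
    (isBoundedUnder_of ⟨max C 0, avgDist_le fun i => hC _ _⟩)
  obtain ⟨k, hkm, hkc⟩ : ∃ k ≥ m, (if Even k then a else b) = c := by
    rcases hc with rfl | rfl
    · exact ⟨2 * m, by omega, by simp⟩
    · exact ⟨2 * m + 1, by omega, by simp⟩
  refine ⟨2 ^ (k + 1) - 1, ?_, hkc ▸ half_dist_le_avgDist_blockOrbit hf z k⟩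
  have := Nat.lt_two_pow_self (n := k + 1)
  omega

theorem _root_.Isometry.not_ALASP [BoundedSpace X] (hf : Isometry f) (hab : 0 < dist a b) :
    ¬ ALASP f := by
  intro hALASP
  obtain ⟨C, hC⟩ := Metric.boundedSpace_iff.1 ‹BoundedSpace X›
  obtain ⟨δ, hδ, hshadow⟩ := hALASP (dist a b / 4) (by positivity)
  obtain ⟨z, hz⟩ := hshadow (blockOrbit f a b)
    ((tendsto_avgDist_blockOrbit (f := f) (a := a) (b := b) hC).limsup_eq.trans_lt hδ)
  have hz' : limsup (avgDist (fun i => f^[i] z) (blockOrbit f a b)) atTop < dist a b / 4 := hz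
  have ha := half_dist_le_limsup_avgDist_blockOrbit (a := a) (b := b) hf hC z (Or.inl rfl)
  have hb := half_dist_le_limsup_avgDist_blockOrbit (a := a) (b := b) hf hC z (Or.inr rfl)
  linarith [dist_triangle_left a b z]

end AverageShadowing

theorem stmt13 :
    ¬ @ALASP Bool (discMetric Bool).toPseudoMetricSpace (fun b : Bool => !b) := by
  let _ := discMetric Bool
  have hnot : Isometry (fun b : Bool => !b) := Isometry.of_dist_eq fun x y => by
    cases x <;> cases y <;> simp [dist_comm]
  exact hnot.not_ALASP (a := false) (b := true) (by simp)
end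

section
/- On the Cantor space Σ₂ = {0,1}^ℕ with the metric d(x,y) = inf{2^{-k} : x_i = y_i for all i < k}, the identity map has the shadowing property but does not have the almost average shadowing property. -/
open Filter Finset

/-!
An ultrametric inequality `d(x, z) ≤ max (d(x, y)) (d(y, z))` keeps every `ε`-pseudo-orbit of the
identity inside the `ε`-ball around its starting point, which therefore shadows it; the metric of
`Σ₂` is an ultrametric.

Almost average shadowing fails for the identity on any metric space with two points `a ≠ b`:
alternate blocks of `L` copies of `a` and of `b`. The jumps of this sequence have average
`d(a, b) / L`, as small as we like, while `d(z, a) + d(z, b) ≥ d(a, b)` forces every point `z` to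
stay at average distance at least `d(a, b) / 2` from it along the times `2 L q`.
-/

lemma isUltrametricDist_of_dist_eq_sInf {α : Type*} [PseudoMetricSpace (ℕ → α)]
    (hd : ∀ x y : ℕ → α,
      dist x y = sInf {r : ℝ | ∃ k : ℕ, (∀ i < k, x i = y i) ∧ r = 2⁻¹ ^ k}) :
    IsUltrametricDist (ℕ → α) := by
  have hbdd : ∀ x y : ℕ → α, BddBelow {r : ℝ | ∃ k : ℕ, (∀ i < k, x i = y i) ∧ r = 2⁻¹ ^ k} :=
    fun x y => ⟨0, by rintro _ ⟨k, -, rfl⟩; positivity⟩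
  have hne : ∀ x y : ℕ → α, {r : ℝ | ∃ k : ℕ, (∀ i < k, x i = y i) ∧ r = 2⁻¹ ^ k}.Nonempty :=
    fun x y => ⟨1, 0, by simp, by simp⟩
  refine ⟨fun x y z => le_of_not_gt fun hlt => ?_⟩
  obtain ⟨_, ⟨k, hxy, rfl⟩, hk⟩ := exists_lt_of_csInf_lt (hne x y)
    ((hd x y).symm.trans_lt ((le_max_left _ _).trans_lt hlt))
  obtain ⟨_, ⟨l, hyz, rfl⟩, hl⟩ := exists_lt_of_csInf_lt (hne y z)
    ((hd y z).symm.trans_lt ((le_max_right _ _).trans_lt hlt))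
  have hxz : dist x z ≤ 2⁻¹ ^ min k l := by
    rw [hd]
    exact csInf_le (hbdd x z) ⟨min k l, fun i hi =>
      (hxy i (hi.trans_le (min_le_left k l))).trans (hyz i (hi.trans_le (min_le_right k l))), rfl⟩
  rcases min_choice k l with h | h <;> rw [h] at hxz <;> linarith

theorem shadowingProperty_id {X : Type*} [PseudoMetricSpace X] [IsUltrametricDist X] :
    shadowingProperty (id : X → X) := by
  intro ε hε
  refine ⟨ε, hε, fun x hx => ⟨x 0, fun i => ?_⟩⟩
  simp only [Function.iterate_id, id_eq] at hx ⊢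
  induction i with
  | zero => simpa using hε
  | succ n ih => exact (dist_triangle_max _ (x n) _).trans_lt (max_lt ih (hx n))

section CesaroAverage

variable {u : ℕ → ℝ}

lemma limsup_avg_le_of_sum_le {c : ℝ} (hu : ∀ i, 0 ≤ u i)
    (h : ∀ n : ℕ, ∑ i ∈ range n, u i ≤ n * c) :
    atTop.limsup (fun n : ℕ => (∑ i ∈ range n, u i) / n) ≤ c := by
  refine limsup_le_of_le (isCoboundedUnder_le_of_le atTop (x := 0) fun n =>
    div_nonneg (sum_nonneg fun i _ => hu i) n.cast_nonneg) ?_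
  filter_upwards [eventually_ge_atTop 1] with n hn
  rw [div_le_iff₀ (by exact_mod_cast hn), mul_comm]
  exact h n

lemma le_limsup_avg_of_le_sum {B c : ℝ} {p : ℕ} (hp : 0 < p) (hB : ∀ i, u i ≤ B)
    (h : ∀ q : ℕ, (p * q : ℕ) * c ≤ ∑ i ∈ range (p * q), u i) :
    c ≤ atTop.limsup (fun n : ℕ => (∑ i ∈ range n, u i) / n) := by
  refine le_limsup_of_frequently_le ?_ ⟨B, ?_⟩
  · refine frequently_atTop.2 fun N => ⟨p * (N + 1), by nlinarith, ?_⟩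
    rw [le_div_iff₀ (by positivity), mul_comm]
    exact h (N + 1)
  · refine eventually_map.2 ?_
    filter_upwards [eventually_ge_atTop 1] with n hn
    rw [div_le_iff₀ (by exact_mod_cast hn)]
    calc ∑ i ∈ range n, u i ≤ ∑ i ∈ range n, B := sum_le_sum fun i _ => hB i
      _ = B * n := by rw [sum_const, card_range, nsmul_eq_mul, mul_comm]

end CesaroAverage

section BlockAlternating

variable {X : Type*}

def blockAlternating (L : ℕ) (a b : X) (i : ℕ) : X := if Even (i / L) then a else b

variable {L : ℕ} (a b : X)

lemma blockAlternating_periodic (hL : 0 < L) :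
    Function.Periodic (blockAlternating L a b) (2 * L) := by
  intro i
  simp [blockAlternating, Nat.add_mul_div_right _ _ hL, Nat.even_add]

variable [PseudoMetricSpace X]

lemma dist_blockAlternating_succ_le (i : ℕ) :
    dist (blockAlternating L a b i) (blockAlternating L a b (i + 1)) ≤
      if L ∣ i + 1 then dist a b else 0 := by
  by_cases hL : L ∣ i + 1
  · rw [if_pos hL]
    unfold blockAlternating
    split_ifs <;> simp [dist_comm]
  · rw [if_neg hL, blockAlternating, blockAlternating, Nat.succ_div, if_neg hL, add_zero,
      dist_self]

lemma sum_dist_blockAlternating_succ_le (n : ℕ) :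
    ∑ i ∈ range n, dist (blockAlternating L a b i) (blockAlternating L a b (i + 1)) ≤
      n * (dist a b / L) :=
  calc _ ≤ ∑ i ∈ range n, if L ∣ i + 1 then dist a b else 0 :=
        sum_le_sum fun i _ => dist_blockAlternating_succ_le a b i
    _ = (n / L : ℕ) * dist a b := by
        rw [← sum_filter, sum_const, Nat.card_multiples, nsmul_eq_mul]
    _ ≤ (n / L : ℝ) * dist a b := mul_le_mul_of_nonneg_right Nat.cast_div_le dist_nonneg
    _ = n * (dist a b / L) := by ring

lemma dist_blockAlternating_le_max (z : X) (i : ℕ) :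
    dist z (blockAlternating L a b i) ≤ max (dist z a) (dist z b) := by
  unfold blockAlternating
  split_ifs
  exacts [le_max_left _ _, le_max_right _ _]

lemma mul_dist_le_sum_dist_blockAlternating (hL : 0 < L) (z : X) :
    L * dist a b ≤ ∑ j ∈ range (2 * L), dist z (blockAlternating L a b j) := by
  have first_half : ∀ j < L, blockAlternating L a b j = a := fun j hj => by
    simp [blockAlternating, Nat.div_eq_of_lt hj]
  have second_half : ∀ j < L, blockAlternating L a b (L + j) = b := fun j hj => by
    simp [blockAlternating, Nat.add_div_left _ hL, Nat.div_eq_of_lt hj]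
  calc L * dist a b = ∑ j ∈ range L, dist a b := by simp
    _ ≤ ∑ j ∈ range L, (dist z a + dist z b) := sum_le_sum fun j _ => dist_triangle_left a b z
    _ = ∑ j ∈ range (2 * L), dist z (blockAlternating L a b j) := by
        rw [two_mul, sum_range_add, ← sum_add_distrib]
        refine sum_congr rfl fun j hj => ?_
        rw [first_half j (mem_range.1 hj), second_half j (mem_range.1 hj)]

lemma mul_half_dist_le_sum_dist_blockAlternating (hL : 0 < L) (z : X) (q : ℕ) :
    (2 * L * q : ℕ) * (dist a b / 2) ≤
      ∑ i ∈ range (2 * L * q), dist z (blockAlternating L a b i) := by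
  induction q with
  | zero => simp
  | succ q ih =>
    have hshift : ∑ j ∈ range (2 * L), dist z (blockAlternating L a b (2 * L * q + j)) =
        ∑ j ∈ range (2 * L), dist z (blockAlternating L a b j) :=
      sum_congr rfl fun j _ => by
        rw [add_comm, mul_comm, ← Nat.cast_id q, (blockAlternating_periodic a b hL).nat_mul q j]
    rw [mul_add_one, sum_range_add, hshift]
    have hblock := mul_dist_le_sum_dist_blockAlternating a b hL z
    push_cast at ih ⊢
    linarith

end BlockAlternating

theorem not_ALASP_id {X : Type*} [MetricSpace X] [Nontrivial X] : ¬ ALASP (id : X → X) := by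
  obtain ⟨a, b, hab⟩ := exists_pair_ne X
  have hD : 0 < dist a b := dist_pos.2 hab
  intro h
  obtain ⟨δ, hδ, hshadow⟩ := h (dist a b / 4) (by positivity)
  obtain ⟨L, hL⟩ := exists_nat_gt (dist a b / δ)
  have hL0 : 0 < L := by exact_mod_cast (div_pos hD hδ).trans hL
  have hjumps : dist a b / L < δ := by
    rwa [div_lt_iff₀ (by positivity), mul_comm, ← div_lt_iff₀ hδ]
  obtain ⟨z, hz⟩ := hshadow (blockAlternating L a b)
    ((limsup_avg_le_of_sum_le (fun _ => dist_nonneg)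
      (sum_dist_blockAlternating_succ_le a b)).trans_lt hjumps)
  have hfar := le_limsup_avg_of_le_sum (by positivity : 0 < 2 * L)
    (dist_blockAlternating_le_max a b z) (mul_half_dist_le_sum_dist_blockAlternating a b hL0 z)
  simp only [Function.iterate_id, id_eq] at hz
  linarith

theorem stmt15 (m : MetricSpace (ℕ → Bool))
    (hm : ∀ x y : ℕ → Bool,
      m.dist x y = sInf {r : ℝ | ∃ k : ℕ, (∀ i < k, x i = y i) ∧ r = 2⁻¹ ^ k}) :
    @shadowingProperty (ℕ → Bool) m.toPseudoMetricSpace id ∧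
    ¬ @ALASP (ℕ → Bool) m.toPseudoMetricSpace id := by
  let := m
  have := isUltrametricDist_of_dist_eq_sInf hm
  exact ⟨shadowingProperty_id, not_ALASP_id⟩
end
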